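/- arXiv:2605.01701 — 3 statements merged into one kernel-verified Lean document; each statement's English description precedes it below -/
import Mathlib

section
/- Assume for every z that f_z is convex and differentiable with ‖∇f_z w‖ ≤ L for all w (L > 0); let λ ∈ [0,1) be a consensus rate for P and let the stepsize be constant, η t = η ≥ 0 for all t ≥ 1. Fix T ≥ 1 and define the average output w̄avg_S = (T⁻¹:ℝ) • ∑_{t=1}^{T} w̄_S t (and analogously for each neighboring dataset). Then (1/(m*n)) * ∑_{r : Fin m} ∑_{k : Fin n} ‖w̄avg_S - w̄avg_{S_{rk}}‖ ≤ 2*η*L*Real.sqrt T + 4*η*L*Real.sqrt T / Real.sqrt (1-λ) + 4*η*L*T/(m*n). -/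
open Finset RealInnerProductSpace

section auxlems
variable {F : Type*} [NormedAddCommGroup F] [InnerProductSpace ℝ F] [CompleteSpace F]

lemma aux_grad_mono (g : F → ℝ) (hc : ConvexOn ℝ Set.univ g) (hd : Differentiable ℝ g)
    (x y : F) : 0 ≤ ⟪gradient g y - gradient g x, y - x⟫ := by
  have hder : ∀ t : ℝ, HasDerivAt (fun s : ℝ => g (s • (y - x) + x))
      ⟪gradient g (t • (y - x) + x), y - x⟫ t := by
    intro t
    have hcurve : HasDerivAt (fun s : ℝ => s • (y - x) + x) (y - x) t := by
      simpa using ((hasDerivAt_id t).smul_const (y - x)).add_const x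
    have hg := (hd (t • (y - x) + x)).hasGradientAt
    rw [hasGradientAt_iff_hasFDerivAt] at hg
    have := hg.comp_hasDerivAt t hcurve
    simpa [Function.comp_def] using this
  have hφ : ConvexOn ℝ Set.univ (fun s : ℝ => g (s • (y - x) + x)) := by
    have h := hc.comp_affineMap (AffineMap.lineMap x y)
    have heq : (g ∘ (AffineMap.lineMap x y : ℝ →ᵃ[ℝ] F)) = fun s : ℝ => g (s • (y - x) + x) := by
      funext s
      simp [Function.comp, AffineMap.lineMap_apply_module']
    rw [heq] at h
    simpa using h
  have h0 := hφ.le_slope_of_hasDerivAt (Set.mem_univ (0:ℝ)) (Set.mem_univ (1:ℝ))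
    zero_lt_one (hder 0)
  have h1 := hφ.slope_le_of_hasDerivAt (Set.mem_univ (0:ℝ)) (Set.mem_univ (1:ℝ))
    zero_lt_one (hder 1)
  have h2 : ⟪gradient g ((0:ℝ) • (y - x) + x), y - x⟫ ≤
      ⟪gradient g ((1:ℝ) • (y - x) + x), y - x⟫ := le_trans h0 h1
  simp only [zero_smul, zero_add, one_smul, sub_add_cancel] at h2
  rw [inner_sub_left]
  linarith

end auxlems

lemma aux_sqrt_step (α γ B : ℝ) (hα : 0 ≤ α) (hγ : 0 ≤ γ) (hB : 0 ≤ B) :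
    Real.sqrt ((α + γ) ^ 2 + B) ≤ Real.sqrt (α ^ 2 + B) + γ := by
  have h1 : α ≤ Real.sqrt (α ^ 2 + B) := by
    have := Real.sqrt_le_sqrt (by linarith : α ^ 2 ≤ α ^ 2 + B)
    rwa [Real.sqrt_sq hα] at this
  have hs : Real.sqrt (α ^ 2 + B) ^ 2 = α ^ 2 + B := Real.sq_sqrt (by positivity)
  have hkey : (α + γ) ^ 2 + B ≤ (Real.sqrt (α ^ 2 + B) + γ) ^ 2 := by nlinarith
  calc Real.sqrt ((α + γ) ^ 2 + B) ≤ Real.sqrt ((Real.sqrt (α ^ 2 + B) + γ) ^ 2) :=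
        Real.sqrt_le_sqrt hkey
    _ = _ := Real.sqrt_sq (by positivity)

lemma aux_sqrt_add (a b : ℝ) (ha : 0 ≤ a) (hb : 0 ≤ b) :
    Real.sqrt (a + b) ≤ Real.sqrt a + Real.sqrt b := by
  have := Real.sqrt_le_sqrt (show a + b ≤ (Real.sqrt a + Real.sqrt b) ^ 2 by
    nlinarith [Real.sq_sqrt ha, Real.sq_sqrt hb, Real.sqrt_nonneg a, Real.sqrt_nonneg b])
  rwa [Real.sqrt_sq (by positivity)] at this

lemma aux_minkowski {m : ℕ} {E : Type*} [NormedAddCommGroup E] (u v : Fin m → E) :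
    Real.sqrt (∑ i, ‖u i + v i‖ ^ 2) ≤
      Real.sqrt (∑ i, ‖u i‖ ^ 2) + Real.sqrt (∑ i, ‖v i‖ ^ 2) := by
  have h := norm_add_le ((WithLp.equiv 2 (Fin m → E)).symm u) ((WithLp.equiv 2 (Fin m → E)).symm v)
  rw [PiLp.norm_eq_of_L2, PiLp.norm_eq_of_L2, PiLp.norm_eq_of_L2] at h
  simpa using h

lemma aux_cauchy {m : ℕ} (a : Fin m → ℝ) (ha : ∀ i, 0 ≤ a i) :
    ∑ i, a i ≤ Real.sqrt m * Real.sqrt (∑ i, a i ^ 2) := by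
  have h : (∑ i, a i) ^ 2 ≤ (m : ℝ) * ∑ i, a i ^ 2 := by
    have := sq_sum_le_card_mul_sum_sq (s := (univ : Finset (Fin m))) (f := a)
    simpa using this
  have h2 : ∑ i, a i = Real.sqrt ((∑ i, a i) ^ 2) :=
    (Real.sqrt_sq (Finset.sum_nonneg fun i _ => ha i)).symm
  rw [h2, ← Real.sqrt_mul (by positivity)]
  exact Real.sqrt_le_sqrt h

lemma aux_avg {E : Type*} [NormedAddCommGroup E] [Module ℝ E]
    {m : ℕ} (P : Fin m → Fin m → ℝ) (hPcol : ∀ l, ∑ i, P i l = 1) (ηc : ℝ)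
    (w g : ℕ → Fin m → E)
    (hrec : ∀ t i, w (t + 1) i = (∑ l, P i l • w t l) - ηc • g (t + 1) i) :
    ∀ t, ∑ i, w (t + 1) i = (∑ l, w t l) - ηc • ∑ i, g (t + 1) i := by
  intro t
  simp only [hrec, Finset.sum_sub_distrib, ← Finset.smul_sum]
  congr 1
  rw [Finset.sum_comm]
  congr 1; funext l
  rw [← Finset.sum_smul, hPcol l, one_smul]

lemma aux_consensus {E : Type*} [NormedAddCommGroup E] [InnerProductSpace ℝ E]
    {m : ℕ} (hm : (0:ℝ) < m) (P : Fin m → Fin m → ℝ)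
    (hPcol : ∀ l, ∑ i, P i l = 1) (hProw : ∀ i, ∑ l, P i l = 1)
    (lam : ℝ) (hlam0 : 0 ≤ lam) (hlam1 : lam < 1)
    (hcons : ∀ x : Fin m → E, ∑ i, x i = 0 →
      ∑ i, ‖∑ l, P i l • x l‖ ^ 2 ≤ lam ^ 2 * ∑ i, ‖x i‖ ^ 2)
    (L ηc : ℝ) (hL : 0 ≤ L) (hηc : 0 ≤ ηc)
    (w0 : E) (w : ℕ → Fin m → E) (g : ℕ → Fin m → E)
    (hg : ∀ t i, ‖g t i‖ ≤ L)
    (hw0 : ∀ i, w 0 i = w0)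
    (hrec : ∀ t i, w (t + 1) i = (∑ l, P i l • w t l) - ηc • g (t + 1) i) :
    ∀ t, Real.sqrt (∑ i, ‖w t i - (m⁻¹ : ℝ) • ∑ i', w t i'‖ ^ 2) ≤
      2 * ηc * L * Real.sqrt m / (1 - lam) := by
  have hm0 : (m : ℝ) ≠ 0 := ne_of_gt hm
  have hlam' : (0:ℝ) < 1 - lam := by linarith
  set x : ℕ → Fin m → E := fun t i => w t i - (m⁻¹ : ℝ) • ∑ i', w t i' with hx
  have hmean : ∀ t, ∑ i, x t i = 0 := by
    intro t
    simp only [hx, Finset.sum_sub_distrib, Finset.sum_const, card_univ, Fintype.card_fin]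
    rw [← Nat.cast_smul_eq_nsmul ℝ, smul_smul, mul_inv_cancel₀ hm0, one_smul, sub_self]
  have hxrec : ∀ t i, x (t + 1) i =
      (∑ l, P i l • x t l) + (-(ηc • (g (t + 1) i - (m⁻¹ : ℝ) • ∑ i', g (t + 1) i'))) := by
    intro t i
    have havg := aux_avg P hPcol ηc w g hrec t
    have hsub : ∑ l, P i l • x t l =
        (∑ l, P i l • w t l) - (m⁻¹ : ℝ) • ∑ i', w t i' := by
      simp only [hx, smul_sub]
      rw [Finset.sum_sub_distrib, ← Finset.sum_smul, hProw i, one_smul]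
    have e1 : x (t + 1) i = w (t + 1) i - (m⁻¹ : ℝ) • ∑ i', w (t + 1) i' := rfl
    rw [e1, hrec t i, havg, hsub]
    module
  have hGnorm : ∀ t i, ‖-(ηc • (g (t + 1) i - (m⁻¹ : ℝ) • ∑ i', g (t + 1) i'))‖ ≤
      2 * ηc * L := by
    intro t i
    rw [norm_neg, norm_smul, Real.norm_eq_abs, abs_of_nonneg hηc]
    have h1 : ‖(m⁻¹ : ℝ) • ∑ i', g (t + 1) i'‖ ≤ L := by
      rw [norm_smul, Real.norm_eq_abs, abs_of_nonneg (by positivity)]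
      calc (m : ℝ)⁻¹ * ‖∑ i', g (t + 1) i'‖ ≤ (m : ℝ)⁻¹ * ∑ i', ‖g (t + 1) i'‖ := by
            gcongr; exact norm_sum_le _ _
        _ ≤ (m : ℝ)⁻¹ * ∑ _i' : Fin m, L := by gcongr with i' _; exact hg _ _
        _ = L := by rw [Finset.sum_const, card_univ, Fintype.card_fin,
              nsmul_eq_mul]; field_simp
    calc ηc * ‖g (t + 1) i - (m⁻¹ : ℝ) • ∑ i', g (t + 1) i'‖ ≤ ηc * (L + L) := by
          gcongr
          exact le_trans (norm_sub_le _ _) (add_le_add (hg _ _) h1)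
      _ = 2 * ηc * L := by ring
  intro t
  induction t with
  | zero =>
    have hz : ∀ i : Fin m, w 0 i - (m⁻¹ : ℝ) • ∑ i', w 0 i' = 0 := by
      intro i
      simp only [hw0, Finset.sum_const, card_univ, Fintype.card_fin]
      rw [← Nat.cast_smul_eq_nsmul ℝ, smul_smul, inv_mul_cancel₀ hm0, one_smul, sub_self]
    simp only [hz]
    simp
    positivity
  | succ t ih =>
    have ih' : Real.sqrt (∑ i, ‖x t i‖ ^ 2) ≤ 2 * ηc * L * Real.sqrt m / (1 - lam) := ih
    have h1 : Real.sqrt (∑ i, ‖x (t + 1) i‖ ^ 2) ≤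
        Real.sqrt (∑ i, ‖∑ l, P i l • x t l‖ ^ 2) +
        Real.sqrt (∑ i, ‖-(ηc • (g (t + 1) i - (m⁻¹ : ℝ) • ∑ i', g (t + 1) i'))‖ ^ 2) := by
      simp_rw [hxrec]
      exact aux_minkowski _ _
    have h2 : Real.sqrt (∑ i, ‖∑ l, P i l • x t l‖ ^ 2) ≤
        lam * Real.sqrt (∑ i, ‖x t i‖ ^ 2) := by
      have := Real.sqrt_le_sqrt (hcons (x t) (hmean t))
      rwa [Real.sqrt_mul (by positivity), Real.sqrt_sq hlam0] at this
    have h3 : Real.sqrt (∑ i, ‖-(ηc • (g (t + 1) i - (m⁻¹ : ℝ) • ∑ i', g (t + 1) i'))‖ ^ 2) ≤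
        2 * ηc * L * Real.sqrt m := by
      have hb : ∑ i, ‖-(ηc • (g (t + 1) i - (m⁻¹ : ℝ) • ∑ i', g (t + 1) i'))‖ ^ 2 ≤
          ∑ _i : Fin m, (2 * ηc * L) ^ 2 := by
        apply Finset.sum_le_sum
        intro i _
        have := hGnorm t i
        nlinarith [norm_nonneg (-(ηc • (g (t + 1) i - (m⁻¹ : ℝ) • ∑ i', g (t + 1) i')))]
      calc Real.sqrt (∑ i, ‖-(ηc • (g (t + 1) i - (m⁻¹ : ℝ) • ∑ i', g (t + 1) i'))‖ ^ 2)
          ≤ Real.sqrt (∑ _i : Fin m, (2 * ηc * L) ^ 2) := Real.sqrt_le_sqrt hb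
        _ = 2 * ηc * L * Real.sqrt m := by
            rw [Finset.sum_const, card_univ, Fintype.card_fin, nsmul_eq_mul,
              Real.sqrt_mul (by positivity), Real.sqrt_sq (by positivity)]
            ring
    have hQ : Real.sqrt (∑ i, ‖x (t + 1) i‖ ^ 2) ≤
        lam * (2 * ηc * L * Real.sqrt m / (1 - lam)) + 2 * ηc * L * Real.sqrt m := by
      have := mul_le_mul_of_nonneg_left ih' hlam0
      linarith
    have heq : lam * (2 * ηc * L * Real.sqrt m / (1 - lam)) + 2 * ηc * L * Real.sqrt m =
        2 * ηc * L * Real.sqrt m / (1 - lam) := by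
      field_simp
      ring
    rw [heq] at hQ
    exact hQ

set_option maxHeartbeats 2000000 in
theorem stmt_13 (d m n : ℕ) (hd : 1 ≤ d) (hm : 1 ≤ m) (hn : 1 ≤ n)
    {Z : Type*} (f : EuclideanSpace ℝ (Fin d) → Z → ℝ)
    (L : ℝ) (hL : 0 < L)
    (hconv : ∀ z : Z, ConvexOn ℝ Set.univ (fun w => f w z))
    (hdiff : ∀ z : Z, Differentiable ℝ (fun w => f w z))
    (hgrad : ∀ (z : Z) (w : EuclideanSpace ℝ (Fin d)),
      ‖gradient (fun w' => f w' z) w‖ ≤ L)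
    (P : Fin m → Fin m → ℝ)
    (hPsymm : ∀ i l, P i l = P l i)
    (hPnonneg : ∀ i l, 0 ≤ P i l)
    (hProw : ∀ i, ∑ l, P i l = 1)
    (lam : ℝ) (hlam0 : 0 ≤ lam) (hlam1 : lam < 1)
    (hcons : ∀ x : Fin m → EuclideanSpace ℝ (Fin d), ∑ i, x i = 0 →
      ∑ i, ‖∑ l, P i l • x l‖ ^ 2 ≤ lam ^ 2 * ∑ i, ‖x i‖ ^ 2)
    (S S' : Fin m → Fin n → Z) (j : ℕ → Fin m → Fin n)
    (η : ℕ → ℝ) (hη : ∀ t, 0 ≤ η t)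
    (ηc : ℝ) (hηc0 : 0 ≤ ηc)
    (hηconst : ∀ t, 1 ≤ t → η t = ηc)
    (w0 : EuclideanSpace ℝ (Fin d))
    (wS : ℕ → Fin m → EuclideanSpace ℝ (Fin d))
    (hwS0 : ∀ i, wS 0 i = w0)
    (hwSrec : ∀ t i, wS (t + 1) i =
      (∑ l, P i l • wS t l) -
        η (t + 1) • gradient (fun w => f w (S i (j (t + 1) i))) (wS t i))
    (wSrk : Fin m → Fin n → ℕ → Fin m → EuclideanSpace ℝ (Fin d))
    (hwSrk0 : ∀ r k i, wSrk r k 0 i = w0)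
    (hwSrkrec : ∀ r k t i, wSrk r k (t + 1) i =
      (∑ l, P i l • wSrk r k t l) -
        η (t + 1) • gradient
          (fun w => f w (if i = r ∧ j (t + 1) i = k then S' r k
            else S i (j (t + 1) i))) (wSrk r k t i))
    (T : ℕ) (hT : 1 ≤ T) :
    (1 / ((m : ℝ) * n)) * ∑ r : Fin m, ∑ k : Fin n,
        ‖(T : ℝ)⁻¹ • (∑ t ∈ Finset.Icc 1 T, (m : ℝ)⁻¹ • ∑ i, wS t i) -
          (T : ℝ)⁻¹ • (∑ t ∈ Finset.Icc 1 T, (m : ℝ)⁻¹ • ∑ i, wSrk r k t i)‖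
      ≤ 2 * ηc * L * Real.sqrt (T : ℝ)
        + 4 * ηc * L * Real.sqrt (T : ℝ) / Real.sqrt (1 - lam)
        + 4 * ηc * L * T / ((m : ℝ) * n) := by
  classical
  have hm0 : (0:ℝ) < m := by exact_mod_cast hm
  have hn0 : (0:ℝ) < n := by exact_mod_cast hn
  have hT0 : (0:ℝ) < T := by exact_mod_cast hT
  have hL0 : (0:ℝ) ≤ L := hL.le
  have hlam' : (0:ℝ) < 1 - lam := by linarith
  have hm0' : (m:ℝ) ≠ 0 := ne_of_gt hm0
  have hPcol : ∀ l, ∑ i, P i l = 1 := by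
    intro l
    calc ∑ i, P i l = ∑ i, P l i := Finset.sum_congr rfl (fun i _ => hPsymm i l)
      _ = 1 := hProw l
  -- gradient sequences
  set gS : ℕ → Fin m → EuclideanSpace ℝ (Fin d) := fun t i =>
    gradient (fun w => f w (S i (j t i))) (wS (t - 1) i) with hgS
  set gS' : Fin m → Fin n → ℕ → Fin m → EuclideanSpace ℝ (Fin d) := fun r k t i =>
    gradient (fun w => f w (if i = r ∧ j t i = k then S' r k else S i (j t i)))
      (wSrk r k (t - 1) i) with hgS'
  have hgSb : ∀ t i, ‖gS t i‖ ≤ L := fun t i => hgrad _ _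
  have hgS'b : ∀ r k t i, ‖gS' r k t i‖ ≤ L := fun r k t i => hgrad _ _
  have hrecS : ∀ t i, wS (t + 1) i = (∑ l, P i l • wS t l) - ηc • gS (t + 1) i := by
    intro t i
    rw [hwSrec t i, hηconst (t + 1) (Nat.le_add_left 1 t)]
    simp [hgS]
  have hrecS' : ∀ r k t i, wSrk r k (t + 1) i =
      (∑ l, P i l • wSrk r k t l) - ηc • gS' r k (t + 1) i := by
    intro r k t i
    rw [hwSrkrec r k t i, hηconst (t + 1) (Nat.le_add_left 1 t)]
    simp [hgS']
  -- consensus bounds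
  have hQS := aux_consensus hm0 P hPcol hProw lam hlam0 hlam1 hcons L ηc hL0 hηc0
    w0 wS gS hgSb hwS0 hrecS
  have hQS' : ∀ r k, ∀ t,
      Real.sqrt (∑ i, ‖wSrk r k t i - (m⁻¹ : ℝ) • ∑ i', wSrk r k t i'‖ ^ 2) ≤
        2 * ηc * L * Real.sqrt m / (1 - lam) := fun r k =>
    aux_consensus hm0 P hPcol hProw lam hlam0 hlam1 hcons L ηc hL0 hηc0
      w0 (wSrk r k) (gS' r k) (hgS'b r k) (hwSrk0 r k) (hrecS' r k)
  -- main per-pair quantities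
  set D : Fin m → Fin n → ℕ → EuclideanSpace ℝ (Fin d) := fun r k t =>
    (m⁻¹ : ℝ) • ∑ i, wS t i - (m⁻¹ : ℝ) • ∑ i, wSrk r k t i with hD
  set N : Fin m → Fin n → ℕ → ℝ := fun r k t =>
    ∑ s ∈ Finset.Icc 1 t, (if j s r = k then (1:ℝ) else 0) with hN
  set Gb : ℝ := 4 * ηc ^ 2 * L ^ 2 + 16 * ηc ^ 2 * L ^ 2 / (1 - lam) with hGb
  set β : ℝ := 2 * ηc * L / m with hβ
  have hGb0 : 0 ≤ Gb := by rw [hGb]; positivity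
  have hβ0 : 0 ≤ β := by rw [hβ]; positivity
  have hN0 : ∀ r k t, 0 ≤ N r k t := by
    intro r k t
    apply Finset.sum_nonneg
    intro s _
    split <;> norm_num

  have hminv : (m:ℝ)⁻¹ * m = 1 := inv_mul_cancel₀ hm0'
  have key : ∀ r k t, ‖D r k t‖ ≤ Real.sqrt (Gb * t) + β * N r k t := by
    intro r k t
    induction t with
    | zero =>
      have h0 : D r k 0 = 0 := by
        simp only [hD, hwS0, hwSrk0]
        simp
      have hN00 : N r k 0 = 0 := by simp [hN]
      rw [h0, norm_zero, hN00, mul_zero, add_zero]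
      exact Real.sqrt_nonneg _
    | succ t ih =>
      set χ : ℝ := if j (t + 1) r = k then (1:ℝ) else 0 with hχ
      have hχ0 : 0 ≤ χ := by rw [hχ]; split <;> norm_num
      set v : EuclideanSpace ℝ (Fin d) :=
        (m⁻¹ : ℝ) • ∑ i, (gS (t + 1) i - gS' r k (t + 1) i) with hv
      have hDrec : D r k (t + 1) = D r k t - ηc • v := by
        have h1 := aux_avg P hPcol ηc wS gS hrecS t
        have h2 := aux_avg P hPcol ηc (wSrk r k) (gS' r k) (hrecS' r k) t
        simp only [hD, hv, h1, h2, Finset.sum_sub_distrib]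
        module
      have hvnorm : ‖v‖ ≤ 2 * L := by
        rw [hv, norm_smul, Real.norm_eq_abs, abs_of_nonneg (by positivity)]
        calc (m:ℝ)⁻¹ * ‖∑ i, (gS (t + 1) i - gS' r k (t + 1) i)‖
            ≤ (m:ℝ)⁻¹ * ∑ i, ‖gS (t + 1) i - gS' r k (t + 1) i‖ := by
              gcongr; exact norm_sum_le _ _
          _ ≤ (m:ℝ)⁻¹ * ∑ _i : Fin m, (2 * L) := by
              gcongr with i _
              exact le_trans (norm_sub_le _ _)
                (by linarith [hgSb (t + 1) i, hgS'b r k (t + 1) i])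
          _ = 2 * L := by
              rw [Finset.sum_const, card_univ, Fintype.card_fin, nsmul_eq_mul]
              field_simp
      have hper : ∀ i : Fin m, -⟪D r k t, gS (t + 1) i - gS' r k (t + 1) i⟫ ≤
          2 * L * (‖wS t i - (m⁻¹:ℝ) • ∑ i', wS t i'‖ +
            ‖wSrk r k t i - (m⁻¹:ℝ) • ∑ i', wSrk r k t i'‖)
          + (if i = r ∧ j (t + 1) i = k then 2 * L * ‖D r k t‖ else 0) := by
        intro i
        have hδn : ‖gS (t + 1) i - gS' r k (t + 1) i‖ ≤ 2 * L :=
          le_trans (norm_sub_le _ _)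
            (by linarith [hgSb (t + 1) i, hgS'b r k (t + 1) i])
        by_cases hcase : i = r ∧ j (t + 1) i = k
        · rw [if_pos hcase]
          have habs := abs_real_inner_le_norm (D r k t) (gS (t + 1) i - gS' r k (t + 1) i)
          have hneg := neg_abs_le ⟪D r k t, gS (t + 1) i - gS' r k (t + 1) i⟫
          have hpos : (0:ℝ) ≤ 2 * L * (‖wS t i - (m⁻¹:ℝ) • ∑ i', wS t i'‖ +
              ‖wSrk r k t i - (m⁻¹:ℝ) • ∑ i', wSrk r k t i'‖) := by positivity
          nlinarith [norm_nonneg (D r k t)]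
        · rw [if_neg hcase, add_zero]
          have hz' : gS' r k (t + 1) i =
              gradient (fun w => f w (S i (j (t + 1) i))) (wSrk r k t i) := by
            simp only [hgS', Nat.add_sub_cancel, if_neg hcase]
          have hzS : gS (t + 1) i =
              gradient (fun w => f w (S i (j (t + 1) i))) (wS t i) := by
            simp only [hgS, Nat.add_sub_cancel]
          have hmono := aux_grad_mono (fun w => f w (S i (j (t + 1) i))) (hconv _) (hdiff _)
            (wSrk r k t i) (wS t i)
          have hmono' : 0 ≤ ⟪gS (t + 1) i - gS' r k (t + 1) i, wS t i - wSrk r k t i⟫ := by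
            rw [hzS, hz']; exact hmono
          have hsplit : ⟪D r k t, gS (t + 1) i - gS' r k (t + 1) i⟫ =
              ⟪gS (t + 1) i - gS' r k (t + 1) i, wS t i - wSrk r k t i⟫ +
              ⟪D r k t - (wS t i - wSrk r k t i), gS (t + 1) i - gS' r k (t + 1) i⟫ := by
            rw [inner_sub_left (𝕜 := ℝ) (D r k t)]
            rw [real_inner_comm (wS t i - wSrk r k t i)]
            ring
          have hDd : ‖D r k t - (wS t i - wSrk r k t i)‖ ≤
              ‖wS t i - (m⁻¹:ℝ) • ∑ i', wS t i'‖ +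
              ‖wSrk r k t i - (m⁻¹:ℝ) • ∑ i', wSrk r k t i'‖ := by
            have heq : D r k t - (wS t i - wSrk r k t i) =
                (wSrk r k t i - (m⁻¹:ℝ) • ∑ i', wSrk r k t i') -
                (wS t i - (m⁻¹:ℝ) • ∑ i', wS t i') := by
              simp only [hD]; module
            rw [heq]
            calc ‖_ - _‖ ≤ ‖wSrk r k t i - (m⁻¹:ℝ) • ∑ i', wSrk r k t i'‖ +
                ‖wS t i - (m⁻¹:ℝ) • ∑ i', wS t i'‖ := norm_sub_le _ _
              _ = _ := by ring
          have hB := neg_abs_le ⟪D r k t - (wS t i - wSrk r k t i),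
            gS (t + 1) i - gS' r k (t + 1) i⟫
          have habs := abs_real_inner_le_norm (D r k t - (wS t i - wSrk r k t i))
            (gS (t + 1) i - gS' r k (t + 1) i)
          have hprod : ‖D r k t - (wS t i - wSrk r k t i)‖ *
              ‖gS (t + 1) i - gS' r k (t + 1) i‖ ≤
              (‖wS t i - (m⁻¹:ℝ) • ∑ i', wS t i'‖ +
               ‖wSrk r k t i - (m⁻¹:ℝ) • ∑ i', wSrk r k t i'‖) * (2 * L) :=
            mul_le_mul hDd hδn (norm_nonneg _) (by positivity)
          linarith
      have hsumIte : ∑ i : Fin m, (if i = r ∧ j (t + 1) i = k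
          then 2 * L * ‖D r k t‖ else 0) = 2 * L * ‖D r k t‖ * χ := by
        rw [Finset.sum_eq_single_of_mem r (Finset.mem_univ r)]
        · by_cases hjk : j (t + 1) r = k
          · rw [if_pos ⟨rfl, hjk⟩, hχ, if_pos hjk, mul_one]
          · rw [if_neg (fun h => hjk h.2), hχ, if_neg hjk, mul_zero]
        · intro b _ hb
          exact if_neg (fun h => hb h.1)
      have hsumc : ∑ i : Fin m, (‖wS t i - (m⁻¹:ℝ) • ∑ i', wS t i'‖ +
          ‖wSrk r k t i - (m⁻¹:ℝ) • ∑ i', wSrk r k t i'‖) ≤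
          4 * ηc * L * m / (1 - lam) := by
        rw [Finset.sum_add_distrib]
        have c1 := aux_cauchy (fun i => ‖wS t i - (m⁻¹:ℝ) • ∑ i', wS t i'‖)
          (fun i => norm_nonneg _)
        have c2 := aux_cauchy (fun i => ‖wSrk r k t i - (m⁻¹:ℝ) • ∑ i', wSrk r k t i'‖)
          (fun i => norm_nonneg _)
        have q1 := hQS t
        have q2 := hQS' r k t
        have hsq : Real.sqrt m * Real.sqrt m = (m:ℝ) := Real.mul_self_sqrt (le_of_lt hm0)
        have e1 : Real.sqrt m * (2 * ηc * L * Real.sqrt m / (1 - lam)) =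
            2 * ηc * L * m / (1 - lam) := by
          field_simp
          linear_combination ηc * hsq
        have b1 : ∑ i : Fin m, ‖wS t i - (m⁻¹:ℝ) • ∑ i', wS t i'‖ ≤
            2 * ηc * L * m / (1 - lam) := by
          calc ∑ i : Fin m, ‖wS t i - (m⁻¹:ℝ) • ∑ i', wS t i'‖ ≤
              Real.sqrt m * Real.sqrt (∑ i, ‖wS t i - (m⁻¹:ℝ) • ∑ i', wS t i'‖ ^ 2) := c1
            _ ≤ Real.sqrt m * (2 * ηc * L * Real.sqrt m / (1 - lam)) := by
                gcongr
            _ = _ := e1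
        have b2 : ∑ i : Fin m, ‖wSrk r k t i - (m⁻¹:ℝ) • ∑ i', wSrk r k t i'‖ ≤
            2 * ηc * L * m / (1 - lam) := by
          calc ∑ i : Fin m, ‖wSrk r k t i - (m⁻¹:ℝ) • ∑ i', wSrk r k t i'‖ ≤
              Real.sqrt m * Real.sqrt (∑ i, ‖wSrk r k t i - (m⁻¹:ℝ) • ∑ i', wSrk r k t i'‖ ^ 2) := c2
            _ ≤ Real.sqrt m * (2 * ηc * L * Real.sqrt m / (1 - lam)) := by
                gcongr
            _ = _ := e1
        calc ∑ i : Fin m, ‖wS t i - (m⁻¹:ℝ) • ∑ i', wS t i'‖ +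
              ∑ i : Fin m, ‖wSrk r k t i - (m⁻¹:ℝ) • ∑ i', wSrk r k t i'‖
            ≤ 2 * ηc * L * m / (1 - lam) + 2 * ηc * L * m / (1 - lam) := add_le_add b1 b2
          _ = 4 * ηc * L * m / (1 - lam) := by ring
      have hinner : ⟪D r k t, v⟫ =
          (m:ℝ)⁻¹ * ∑ i, ⟪D r k t, gS (t + 1) i - gS' r k (t + 1) i⟫ := by
        rw [hv, real_inner_smul_right, inner_sum]
      have hIP2 : -⟪D r k t, v⟫ ≤ 8 * ηc * L ^ 2 / (1 - lam) + 2 * L * ‖D r k t‖ * χ / m := by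
        have hsum := Finset.sum_le_sum (fun i (_ : i ∈ univ) => hper i)
        rw [Finset.sum_add_distrib, hsumIte, ← Finset.mul_sum] at hsum
        have hsum2 : ∑ i : Fin m, -⟪D r k t, gS (t + 1) i - gS' r k (t + 1) i⟫ ≤
            2 * L * (4 * ηc * L * m / (1 - lam)) + 2 * L * ‖D r k t‖ * χ := by
          have := mul_le_mul_of_nonneg_left hsumc (by positivity : (0:ℝ) ≤ 2 * L)
          linarith
        have hneg : -⟪D r k t, v⟫ =
            (m:ℝ)⁻¹ * ∑ i : Fin m, -⟪D r k t, gS (t + 1) i - gS' r k (t + 1) i⟫ := by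
          rw [hinner, Finset.sum_neg_distrib]
          ring
        rw [hneg]
        have := mul_le_mul_of_nonneg_left hsum2 (by positivity : (0:ℝ) ≤ (m:ℝ)⁻¹)
        have e2 : (m:ℝ)⁻¹ * (2 * L * (4 * ηc * L * m / (1 - lam)) + 2 * L * ‖D r k t‖ * χ) =
            8 * ηc * L ^ 2 / (1 - lam) + 2 * L * ‖D r k t‖ * χ / m := by
          field_simp
          ring
        linarith
      have hvsq : ‖ηc • v‖ ^ 2 ≤ 4 * ηc ^ 2 * L ^ 2 := by
        rw [norm_smul, Real.norm_eq_abs, abs_of_nonneg hηc0, mul_pow]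
        have h1 : ‖v‖ ^ 2 ≤ (2 * L) ^ 2 := by nlinarith [norm_nonneg v, hvnorm]
        calc ηc ^ 2 * ‖v‖ ^ 2 ≤ ηc ^ 2 * (2 * L) ^ 2 :=
              mul_le_mul_of_nonneg_left h1 (sq_nonneg ηc)
          _ = 4 * ηc ^ 2 * L ^ 2 := by ring
      have hexp : ‖D r k (t + 1)‖ ^ 2 =
          ‖D r k t‖ ^ 2 - 2 * (ηc * ⟪D r k t, v⟫) + ‖ηc • v‖ ^ 2 := by
        rw [hDrec, norm_sub_sq_real, real_inner_smul_right]
      have hscaled := mul_le_mul_of_nonneg_left hIP2 (by positivity : (0:ℝ) ≤ 2 * ηc)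
      have e3 : 2 * ηc * (8 * ηc * L ^ 2 / (1 - lam) + 2 * L * ‖D r k t‖ * χ / m) =
          16 * ηc ^ 2 * L ^ 2 / (1 - lam) + 2 * β * ‖D r k t‖ * χ := by
        rw [hβ]; ring
      rw [e3] at hscaled
      have e4 : ‖D r k t‖ ^ 2 + 2 * β * ‖D r k t‖ * χ ≤ (‖D r k t‖ + β * χ) ^ 2 := by
        nlinarith [sq_nonneg (β * χ)]
      have hDnorm2 : ‖D r k (t + 1)‖ ^ 2 ≤ (‖D r k t‖ + β * χ) ^ 2 + Gb := by
        rw [hGb]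
        nlinarith [hexp, hscaled, hvsq, e4]
      have hNsucc : N r k (t + 1) = N r k t + χ := by
        simp only [hN, hχ]
        exact Finset.sum_Icc_succ_top (Nat.succ_le_succ (Nat.zero_le t)) _
      have hstep : ‖D r k (t + 1)‖ ≤ Real.sqrt ((‖D r k t‖ + β * χ) ^ 2 + Gb) := by
        rw [← Real.sqrt_sq (norm_nonneg (D r k (t + 1)))]
        exact Real.sqrt_le_sqrt hDnorm2
      have h5 : ‖D r k t‖ + β * χ ≤ Real.sqrt (Gb * t) + β * N r k (t + 1) := by
        rw [hNsucc]
        have hβχ : β * (N r k t + χ) = β * N r k t + β * χ := by ring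
        rw [hβχ]
        linarith [ih]
      have hmid : Real.sqrt ((‖D r k t‖ + β * χ) ^ 2 + Gb) ≤
          Real.sqrt ((Real.sqrt (Gb * t) + β * N r k (t + 1)) ^ 2 + Gb) := by
        apply Real.sqrt_le_sqrt
        have hbase : (0:ℝ) ≤ ‖D r k t‖ + β * χ :=
          add_nonneg (norm_nonneg _) (mul_nonneg hβ0 hχ0)
        exact add_le_add (pow_le_pow_left₀ hbase h5 2) (le_refl Gb)
      have hfin : Real.sqrt ((Real.sqrt (Gb * t) + β * N r k (t + 1)) ^ 2 + Gb) ≤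
          Real.sqrt (Gb * (t + 1 : ℕ)) + β * N r k (t + 1) := by
        have haux := aux_sqrt_step (Real.sqrt (Gb * t)) (β * N r k (t + 1)) Gb
          (Real.sqrt_nonneg _) (mul_nonneg hβ0 (hN0 _ _ _)) hGb0
        rw [Real.sq_sqrt (by positivity)] at haux
        have ecast : Gb * ((t + 1 : ℕ) : ℝ) = Gb * t + Gb := by push_cast; ring
        rw [ecast]
        exact haux
      exact le_trans hstep (le_trans hmid hfin)

  have hpair : ∀ r k,
      ‖(T:ℝ)⁻¹ • (∑ t ∈ Finset.Icc 1 T, (m:ℝ)⁻¹ • ∑ i, wS t i) -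
        (T:ℝ)⁻¹ • (∑ t ∈ Finset.Icc 1 T, (m:ℝ)⁻¹ • ∑ i, wSrk r k t i)‖ ≤
        Real.sqrt (Gb * T) + β * N r k T := by
    intro r k
    have hDT : ∀ t ∈ Finset.Icc 1 T, ‖D r k t‖ ≤ Real.sqrt (Gb * T) + β * N r k T := by
      intro t ht
      rcases Finset.mem_Icc.mp ht with ⟨h1t, htT⟩
      refine le_trans (key r k t) (add_le_add ?_ ?_)
      · apply Real.sqrt_le_sqrt
        have hcast : (t:ℝ) ≤ T := by exact_mod_cast htT
        nlinarith [hGb0]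
      · apply mul_le_mul_of_nonneg_left _ hβ0
        simp only [hN]
        apply Finset.sum_le_sum_of_subset_of_nonneg (Finset.Icc_subset_Icc_right htT)
        intro s _ _
        split <;> norm_num
    have heq : (T:ℝ)⁻¹ • (∑ t ∈ Finset.Icc 1 T, (m:ℝ)⁻¹ • ∑ i, wS t i) -
        (T:ℝ)⁻¹ • (∑ t ∈ Finset.Icc 1 T, (m:ℝ)⁻¹ • ∑ i, wSrk r k t i) =
        (T:ℝ)⁻¹ • ∑ t ∈ Finset.Icc 1 T, D r k t := by
      rw [← smul_sub, ← Finset.sum_sub_distrib]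
    rw [heq, norm_smul, Real.norm_eq_abs, abs_of_nonneg (by positivity)]
    calc (T:ℝ)⁻¹ * ‖∑ t ∈ Finset.Icc 1 T, D r k t‖
        ≤ (T:ℝ)⁻¹ * ∑ t ∈ Finset.Icc 1 T, ‖D r k t‖ := by
          gcongr
          exact norm_sum_le _ _
      _ ≤ (T:ℝ)⁻¹ * ∑ _t ∈ Finset.Icc 1 T, (Real.sqrt (Gb * T) + β * N r k T) := by
          gcongr with t ht
          exact hDT t ht
      _ = Real.sqrt (Gb * T) + β * N r k T := by
          rw [Finset.sum_const, Nat.card_Icc, nsmul_eq_mul]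
          simp only [Nat.add_sub_cancel]
          field_simp
  have hNsum : ∀ r, ∑ k, N r k T = T := by
    intro r
    simp only [hN]
    calc ∑ k : Fin n, ∑ s ∈ Finset.Icc 1 T, (if j s r = k then (1:ℝ) else 0)
        = ∑ s ∈ Finset.Icc 1 T, ∑ k : Fin n, (if j s r = k then (1:ℝ) else 0) :=
          Finset.sum_comm
      _ = ∑ _s ∈ Finset.Icc 1 T, (1:ℝ) := by
          apply Finset.sum_congr rfl
          intro s _
          simp
      _ = T := by
          rw [Finset.sum_const, Nat.card_Icc, nsmul_eq_mul]
          simp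
  have hsumall : ∑ r : Fin m, ∑ k : Fin n, (Real.sqrt (Gb * T) + β * N r k T) =
      (m:ℝ) * ((n:ℝ) * Real.sqrt (Gb * T) + β * T) := by
    have hrow : ∀ r : Fin m, ∑ k : Fin n, (Real.sqrt (Gb * T) + β * N r k T) =
        (n:ℝ) * Real.sqrt (Gb * T) + β * T := by
      intro r
      rw [Finset.sum_add_distrib, Finset.sum_const, card_univ, Fintype.card_fin, nsmul_eq_mul,
        ← Finset.mul_sum, hNsum r]
    rw [Finset.sum_congr rfl (fun r _ => hrow r), Finset.sum_const, card_univ,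
      Fintype.card_fin, nsmul_eq_mul]
  have hmain : (1 / ((m:ℝ) * n)) * ∑ r : Fin m, ∑ k : Fin n,
      ‖(T:ℝ)⁻¹ • (∑ t ∈ Finset.Icc 1 T, (m:ℝ)⁻¹ • ∑ i, wS t i) -
        (T:ℝ)⁻¹ • (∑ t ∈ Finset.Icc 1 T, (m:ℝ)⁻¹ • ∑ i, wSrk r k t i)‖ ≤
      Real.sqrt (Gb * T) + β * T / n := by
    have hsum_le : ∑ r : Fin m, ∑ k : Fin n,
        ‖(T:ℝ)⁻¹ • (∑ t ∈ Finset.Icc 1 T, (m:ℝ)⁻¹ • ∑ i, wS t i) -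
          (T:ℝ)⁻¹ • (∑ t ∈ Finset.Icc 1 T, (m:ℝ)⁻¹ • ∑ i, wSrk r k t i)‖ ≤
        ∑ r : Fin m, ∑ k : Fin n, (Real.sqrt (Gb * T) + β * N r k T) :=
      Finset.sum_le_sum (fun r _ => Finset.sum_le_sum (fun k _ => hpair r k))
    rw [hsumall] at hsum_le
    calc (1 / ((m:ℝ) * n)) * ∑ r : Fin m, ∑ k : Fin n,
        ‖(T:ℝ)⁻¹ • (∑ t ∈ Finset.Icc 1 T, (m:ℝ)⁻¹ • ∑ i, wS t i) -
          (T:ℝ)⁻¹ • (∑ t ∈ Finset.Icc 1 T, (m:ℝ)⁻¹ • ∑ i, wSrk r k t i)‖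
        ≤ (1 / ((m:ℝ) * n)) * ((m:ℝ) * ((n:ℝ) * Real.sqrt (Gb * T) + β * T)) := by
          apply mul_le_mul_of_nonneg_left hsum_le (by positivity)
      _ = Real.sqrt (Gb * T) + β * T / n := by
          field_simp
  have hC : Real.sqrt (Gb * T) ≤ 2 * ηc * L * Real.sqrt T +
      4 * ηc * L * Real.sqrt T / Real.sqrt (1 - lam) := by
    have hsplit : Gb * T = (2 * ηc * L) ^ 2 * T + (4 * ηc * L) ^ 2 * T / (1 - lam) := by
      rw [hGb]; ring
    rw [hsplit]
    refine le_trans (aux_sqrt_add _ _ (by positivity) (by positivity)) ?_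
    have e1 : Real.sqrt ((2 * ηc * L) ^ 2 * T) = 2 * ηc * L * Real.sqrt T := by
      rw [Real.sqrt_mul (by positivity), Real.sqrt_sq (by positivity)]
    have e2 : Real.sqrt ((4 * ηc * L) ^ 2 * T / (1 - lam)) =
        4 * ηc * L * Real.sqrt T / Real.sqrt (1 - lam) := by
      rw [Real.sqrt_div (by positivity), Real.sqrt_mul (by positivity),
        Real.sqrt_sq (by positivity)]
    rw [e1, e2]
  have hβT : β * T / n = 2 * ηc * L * T / ((m:ℝ) * n) := by
    rw [hβ]; ring
  have hlast : 2 * ηc * L * T / ((m:ℝ) * n) ≤ 4 * ηc * L * T / ((m:ℝ) * n) := by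
    have hpos : (0:ℝ) ≤ 2 * ηc * L * T / ((m:ℝ) * n) := by positivity
    have hsplit2 : 4 * ηc * L * (T:ℝ) / ((m:ℝ) * n) =
        2 * ηc * L * T / ((m:ℝ) * n) + 2 * ηc * L * T / ((m:ℝ) * n) := by ring
    linarith
  rw [hβT] at hmain
  linarith [hmain, hC, hlast]
end

section
/- Let W and V be real Hilbert spaces and g : W → V → ℝ a function such that for every v the map w ↦ g w v is differentiable and ρ-strongly convex (w ↦ g w v - (ρ/2)*‖w‖^2 is convex), for every w the map v ↦ g w v is differentiable and ρ-strongly concave (v ↦ g w v + (ρ/2)*‖v‖^2 is concave), where ρ ≥ 0, and the joint gradient map G : W × V → W × V, G (w,v) = (∇_w g(w,v), ∇_v g(w,v)), is β-Lipschitz with respect to the product norm ‖(a,b)‖ = Real.sqrt (‖a‖^2 + ‖b‖^2), with β > 0. Then for every η ≥ 0 and all (w,v), (w̃,ṽ): ‖(w - η • ∇_w g(w,v)) - (w̃ - η • ∇_w g(w̃,ṽ))‖^2 + ‖(v + η • ∇_v g(w,v)) - (ṽ + η • ∇_v g(w̃,ṽ))‖^2 ≤ (1 - 2*ρ*η + β^2*η^2)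 * (‖w - w̃‖^2 + ‖v - ṽ‖^2). -/
open RealInnerProductSpace

lemma grad_neg' {E : Type*} [NormedAddCommGroup E] [InnerProductSpace ℝ E] [CompleteSpace E]
    (f : E → ℝ) (x : E) : gradient (fun y => -(f y)) x = -gradient f x := by
  show (InnerProductSpace.toDual ℝ E).symm _ = -(InnerProductSpace.toDual ℝ E).symm _
  rw [fderiv_fun_neg, map_neg]

lemma strong_tangent {E : Type*} [NormedAddCommGroup E] [InnerProductSpace ℝ E] [CompleteSpace E]
    {f : E → ℝ} {ρ : ℝ} (hf : Differentiable ℝ f)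
    (hc : ConvexOn ℝ Set.univ (fun w : E => f w - (ρ / 2) * ‖w‖ ^ 2)) (x y : E) :
    f x + ⟪gradient f x, y - x⟫ + (ρ / 2) * ‖y - x‖ ^ 2 ≤ f y := by
  set d := y - x with hd
  -- 1D restriction
  set ψ : ℝ → ℝ := fun t => f (x + t • d) - (ρ / 2) * ‖x + t • d‖ ^ 2 with hψ
  have hψconv : ConvexOn ℝ Set.univ ψ := by
    have h := hc.comp_affineMap (AffineMap.lineMap x y)
    have he : (fun w : E => f w - (ρ / 2) * ‖w‖ ^ 2) ∘ (AffineMap.lineMap x y) = ψ := by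
      funext t
      simp only [Function.comp_apply, AffineMap.lineMap_apply_module', ψ, hd]
      rw [add_comm (t • (y - x)) x]
    rw [he] at h
    simpa using h
  have hc1 : HasDerivAt (fun t : ℝ => x + t • d) d 0 := by
    simpa using ((hasDerivAt_id (0:ℝ)).smul_const d).const_add x
  have hF : HasDerivAt (fun t : ℝ => f (x + t • d)) ⟪gradient f x, d⟫ 0 := by
    have h0 : HasFDerivAt f (fderiv ℝ f x) (x + (0:ℝ) • d) := by
      simpa using (hf x).hasFDerivAt
    have := h0.comp_hasDerivAt 0 hc1
    have hiv : fderiv ℝ f x d = ⟪gradient f x, d⟫ := by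
      rw [gradient, InnerProductSpace.toDual_symm_apply]
    rw [← hiv]; exact this
  have hpoly : HasDerivAt (fun t : ℝ => ‖x‖ ^ 2 + 2 * (t * ⟪x, d⟫) + t ^ 2 * ‖d‖ ^ 2)
      (2 * ⟪x, d⟫) 0 := by
    have h1 : HasDerivAt (fun t : ℝ => t * ⟪x, d⟫) ⟪x, d⟫ 0 := hasDerivAt_mul_const _
    have h2 : HasDerivAt (fun t : ℝ => t ^ 2 * ‖d‖ ^ 2) 0 0 := by
      simpa using (hasDerivAt_pow 2 (0:ℝ)).mul_const (‖d‖ ^ 2)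
    have h := ((h1.const_mul 2).const_add (‖x‖ ^ 2)).add h2
    rw [add_zero] at h; exact h
  have hnormeq : (fun t : ℝ => (ρ / 2) * ‖x + t • d‖ ^ 2)
      = fun t : ℝ => (ρ / 2) * (‖x‖ ^ 2 + 2 * (t * ⟪x, d⟫) + t ^ 2 * ‖d‖ ^ 2) := by
    funext t
    have := norm_add_sq_real x (t • d)
    rw [this, real_inner_smul_right, norm_smul, mul_pow, Real.norm_eq_abs, sq_abs]
  have hQ : HasDerivAt (fun t : ℝ => (ρ / 2) * ‖x + t • d‖ ^ 2) (ρ * ⟪x, d⟫) 0 := by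
    rw [hnormeq]
    have h := hpoly.const_mul (ρ / 2)
    have he : ρ / 2 * (2 * ⟪x, d⟫) = ρ * ⟪x, d⟫ := by ring
    rw [he] at h
    exact h
  have hψd : HasDerivAt ψ (⟪gradient f x, d⟫ - ρ * ⟪x, d⟫) 0 := hF.sub hQ
  have hslope := hψconv.le_slope_of_hasDerivAt (Set.mem_univ (0:ℝ)) (Set.mem_univ (1:ℝ))
    zero_lt_one hψd
  rw [slope_def_field] at hslope
  have hψ1 : ψ 1 = f y - (ρ / 2) * ‖y‖ ^ 2 := by simp [ψ, hd]
  have hψ0 : ψ 0 = f x - (ρ / 2) * ‖x‖ ^ 2 := by simp [ψ]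
  rw [hψ1, hψ0] at hslope
  have hix : ⟪x, d⟫ = ⟪x, y⟫ - ⟪x, x⟫ := by rw [hd, inner_sub_right]
  have hxx : ⟪x, x⟫ = ‖x‖ ^ 2 := real_inner_self_eq_norm_sq x
  have hdsq : ‖d‖ ^ 2 = ‖y‖ ^ 2 - 2 * ⟪x, y⟫ + ‖x‖ ^ 2 := by
    rw [hd, norm_sub_sq_real, real_inner_comm x y]
  have key : ρ / 2 * ‖d‖ ^ 2 + ρ * ⟪x, d⟫ + ρ / 2 * ‖x‖ ^ 2 - ρ / 2 * ‖y‖ ^ 2 = 0 := by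
    rw [hdsq, hix, hxx]; ring
  norm_num at hslope
  have hiv2 : fderiv ℝ f x d = ⟪gradient f x, d⟫ := by
    rw [gradient, InnerProductSpace.toDual_symm_apply]
  linarith [hslope, key, hiv2]

theorem stmt_14 {W V : Type*}
    [NormedAddCommGroup W] [InnerProductSpace ℝ W] [CompleteSpace W]
    [NormedAddCommGroup V] [InnerProductSpace ℝ V] [CompleteSpace V]
    (g : W → V → ℝ) (ρ β : ℝ) (hρ : 0 ≤ ρ) (hβ : 0 < β)
    (hdiffw : ∀ v : V, Differentiable ℝ (fun w => g w v))
    (hdiffv : ∀ w : W, Differentiable ℝ (fun v => g w v))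
    (hsc : ∀ v : V, ConvexOn ℝ Set.univ (fun w : W => g w v - (ρ / 2) * ‖w‖ ^ 2))
    (hscc : ∀ w : W, ConcaveOn ℝ Set.univ (fun v : V => g w v + (ρ / 2) * ‖v‖ ^ 2))
    (hlip : ∀ (w w' : W) (v v' : V),
      Real.sqrt (‖gradient (fun u => g u v) w - gradient (fun u => g u v') w'‖ ^ 2
          + ‖gradient (fun u => g w u) v - gradient (fun u => g w' u) v'‖ ^ 2)
        ≤ β * Real.sqrt (‖w - w'‖ ^ 2 + ‖v - v'‖ ^ 2))
    (η : ℝ) (hη : 0 ≤ η) (w w' : W) (v v' : V) :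
    ‖(w - η • gradient (fun u => g u v) w) - (w' - η • gradient (fun u => g u v') w')‖ ^ 2
        + ‖(v + η • gradient (fun u => g w u) v)
            - (v' + η • gradient (fun u => g w' u) v')‖ ^ 2
      ≤ (1 - 2 * ρ * η + β ^ 2 * η ^ 2) * (‖w - w'‖ ^ 2 + ‖v - v'‖ ^ 2) := by
  set A := gradient (fun u => g u v) w with hA
  set A' := gradient (fun u => g u v') w' with hA'
  set B := gradient (fun u => g w u) v with hB
  set B' := gradient (fun u => g w' u) v' with hB'
  -- strong convexity inequalities
  have h1 := strong_tangent (hdiffw v) (hsc v) w w'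
  have h2 := strong_tangent (hdiffw v') (hsc v') w' w
  have hcv : ∀ w0 : W, ConvexOn ℝ Set.univ (fun u : V => -(g w0 u) - (ρ / 2) * ‖u‖ ^ 2) := by
    intro w0
    have : (fun u : V => -(g w0 u) - (ρ / 2) * ‖u‖ ^ 2)
        = fun u : V => -(g w0 u + (ρ / 2) * ‖u‖ ^ 2) := by funext u; ring
    rw [this]
    exact (hscc w0).neg
  have h3 := strong_tangent (f := fun u => -(g w u)) ((hdiffv w).neg) (hcv w) v v'
  have h4 := strong_tangent (f := fun u => -(g w' u)) ((hdiffv w').neg) (hcv w') v' v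
  rw [grad_neg' (fun u => g w u) v] at h3
  rw [grad_neg' (fun u => g w' u) v'] at h4
  rw [inner_neg_left] at h3 h4
  -- monotonicity of the saddle operator
  have hmono : ρ * (‖w - w'‖ ^ 2 + ‖v - v'‖ ^ 2)
      ≤ ⟪w - w', A - A'⟫ - ⟪v - v', B - B'⟫ := by
    have e1 : ⟪w - w', A - A'⟫ = ⟪A, w - w'⟫ - ⟪A', w - w'⟫ := by
      rw [real_inner_comm, inner_sub_left]
    have e2 : ⟪v - v', B - B'⟫ = ⟪B, v - v'⟫ - ⟪B', v - v'⟫ := by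
      rw [real_inner_comm, inner_sub_left]
    have e3 : ⟪A, w' - w⟫ = -⟪A, w - w'⟫ := by rw [← inner_neg_right, neg_sub]
    have e4 : ⟪A', w - w'⟫ = -⟪A', w' - w⟫ := by rw [← inner_neg_right, neg_sub]
    have e5 : ⟪B, v' - v⟫ = -⟪B, v - v'⟫ := by rw [← inner_neg_right, neg_sub]
    have e6 : ⟪B', v - v'⟫ = -⟪B', v' - v⟫ := by rw [← inner_neg_right, neg_sub]
    have e7 : ‖w' - w‖ = ‖w - w'‖ := norm_sub_rev _ _
    have e8 : ‖v' - v‖ = ‖v - v'‖ := norm_sub_rev _ _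
    rw [e7] at h1
    rw [e8] at h3
    rw [e1, e2]
    linarith [h1, h2, h3, h4, e3, e4, e5, e6]
  -- squared Lipschitz bound
  have hS : (0:ℝ) ≤ ‖w - w'‖ ^ 2 + ‖v - v'‖ ^ 2 := by positivity
  have hlipsq : ‖A - A'‖ ^ 2 + ‖B - B'‖ ^ 2 ≤ β ^ 2 * (‖w - w'‖ ^ 2 + ‖v - v'‖ ^ 2) := by
    have h := hlip w w' v v'
    have ha : (0:ℝ) ≤ ‖A - A'‖ ^ 2 + ‖B - B'‖ ^ 2 := by positivity
    nlinarith [Real.sq_sqrt ha, Real.sq_sqrt hS, Real.sqrt_nonneg (‖A - A'‖ ^ 2 + ‖B - B'‖ ^ 2),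
      Real.sqrt_nonneg (‖w - w'‖ ^ 2 + ‖v - v'‖ ^ 2),
      mul_self_le_mul_self (Real.sqrt_nonneg (‖A - A'‖ ^ 2 + ‖B - B'‖ ^ 2)) h]
  -- expand the squared norms
  have e1 : (w - η • A) - (w' - η • A') = (w - w') - η • (A - A') := by
    rw [smul_sub]; abel
  have e2 : (v + η • B) - (v' + η • B') = (v - v') + η • (B - B') := by
    rw [smul_sub]; abel
  rw [e1, e2]
  have n1 : ‖(w - w') - η • (A - A')‖ ^ 2
      = ‖w - w'‖ ^ 2 - 2 * (η * ⟪w - w', A - A'⟫) + η ^ 2 * ‖A - A'‖ ^ 2 := by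
    rw [norm_sub_sq_real, real_inner_smul_right, norm_smul, mul_pow, Real.norm_eq_abs, sq_abs]
  have n2 : ‖(v - v') + η • (B - B')‖ ^ 2
      = ‖v - v'‖ ^ 2 + 2 * (η * ⟪v - v', B - B'⟫) + η ^ 2 * ‖B - B'‖ ^ 2 := by
    rw [norm_add_sq_real, real_inner_smul_right, norm_smul, mul_pow, Real.norm_eq_abs, sq_abs]
  rw [n1, n2]
  nlinarith [mul_nonneg hη (sub_nonneg.mpr hmono),
    mul_le_mul_of_nonneg_left hlipsq (sq_nonneg η)]
end

section
/- Assume ‖∇_w f(w,v,z)‖ ≤ L and ‖∇_v f(w,v,z)‖ ≤ L for all w, v, z (L > 0); for each z the map w ↦ f w v z is convex and v ↦ f w v z is concave; for each z the joint gradient map (w,v) ↦ (∇_w f(w,v,z), ∇_v f(w,v,z)) is β-Lipschitz with respect to the norm ‖(a,b)‖ = Real.sqrt(‖a‖^2 + ‖b‖^2), with β > 0; λ ∈ [0,1) is a consensus rate for P; and the stepsizes satisfy ∑_{t=1}^{T} η t ≤ 1/(2*β). Then (1/(m*n)) * ∑_{r : Fin m} ∑_{k : Fin n} Real.sqrt (‖w̄_S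 T - w̄_{S_{rk}} T‖^2 + ‖v̄_S T - v̄_{S_{rk}} T‖^2) ≤ 8*Real.sqrt 2*β*L * ∑_{t=1}^{T} η t * ∑_{q=1}^{t-1} η q * λ^(t-q-1) + (4*Real.sqrt 2*L/(m*n)) * ∑_{t=1}^{T} η t. -/
open Finset

section Helpers

lemma real_two_triangle (x1 y1 x2 y2 : ℝ) :
    Real.sqrt ((x1 + x2) ^ 2 + (y1 + y2) ^ 2)
      ≤ Real.sqrt (x1 ^ 2 + y1 ^ 2) + Real.sqrt (x2 ^ 2 + y2 ^ 2) := by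
  have h1 : x1 * x2 + y1 * y2 ≤ Real.sqrt (x1 ^ 2 + y1 ^ 2) * Real.sqrt (x2 ^ 2 + y2 ^ 2) := by
    rw [← Real.sqrt_mul (by positivity)]
    rcases le_or_gt (x1 * x2 + y1 * y2) 0 with h | h
    · exact h.trans (Real.sqrt_nonneg _)
    · apply Real.le_sqrt_of_sq_le
      nlinarith [sq_nonneg (x1 * y2 - x2 * y1)]
  have h2 : (x1 + x2) ^ 2 + (y1 + y2) ^ 2
      ≤ (Real.sqrt (x1 ^ 2 + y1 ^ 2) + Real.sqrt (x2 ^ 2 + y2 ^ 2)) ^ 2 := by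
    have e1 : Real.sqrt (x1 ^ 2 + y1 ^ 2) ^ 2 = x1 ^ 2 + y1 ^ 2 := Real.sq_sqrt (by positivity)
    have e2 : Real.sqrt (x2 ^ 2 + y2 ^ 2) ^ 2 = x2 ^ 2 + y2 ^ 2 := Real.sq_sqrt (by positivity)
    nlinarith [h1]
  calc Real.sqrt ((x1 + x2) ^ 2 + (y1 + y2) ^ 2)
      ≤ Real.sqrt ((Real.sqrt (x1 ^ 2 + y1 ^ 2) + Real.sqrt (x2 ^ 2 + y2 ^ 2)) ^ 2) :=
        Real.sqrt_le_sqrt h2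
    _ = _ := Real.sqrt_sq (by positivity)

lemma sqrt_sq_add_sq_mono {x1 y1 x2 y2 : ℝ} (h1 : |x1| ≤ x2) (h2 : |y1| ≤ y2) :
    Real.sqrt (x1 ^ 2 + y1 ^ 2) ≤ Real.sqrt (x2 ^ 2 + y2 ^ 2) := by
  apply Real.sqrt_le_sqrt
  have e1 := sq_abs x1; have e2 := sq_abs y1
  nlinarith [abs_nonneg x1, abs_nonneg y1]

lemma real_minkowski {ι : Type*} (s : Finset ι) (p q : ι → ℝ) :
    Real.sqrt (∑ i ∈ s, (p i + q i) ^ 2)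
      ≤ Real.sqrt (∑ i ∈ s, p i ^ 2) + Real.sqrt (∑ i ∈ s, q i ^ 2) := by
  have hcs := Real.sum_mul_le_sqrt_mul_sqrt s p q
  have h2 : ∑ i ∈ s, (p i + q i) ^ 2
      ≤ (Real.sqrt (∑ i ∈ s, p i ^ 2) + Real.sqrt (∑ i ∈ s, q i ^ 2)) ^ 2 := by
    have e1 : Real.sqrt (∑ i ∈ s, p i ^ 2) ^ 2 = ∑ i ∈ s, p i ^ 2 :=
      Real.sq_sqrt (by positivity)
    have e2 : Real.sqrt (∑ i ∈ s, q i ^ 2) ^ 2 = ∑ i ∈ s, q i ^ 2 :=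
      Real.sq_sqrt (by positivity)
    have expand : ∑ i ∈ s, (p i + q i) ^ 2
        = ∑ i ∈ s, p i ^ 2 + 2 * ∑ i ∈ s, p i * q i + ∑ i ∈ s, q i ^ 2 := by
      simp only [add_sq, Finset.sum_add_distrib, Finset.mul_sum]
      ring_nf
    nlinarith [hcs]
  calc Real.sqrt (∑ i ∈ s, (p i + q i) ^ 2)
      ≤ Real.sqrt ((Real.sqrt (∑ i ∈ s, p i ^ 2) + Real.sqrt (∑ i ∈ s, q i ^ 2)) ^ 2) :=
        Real.sqrt_le_sqrt h2
    _ = _ := Real.sqrt_sq (by positivity)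

section Vec
variable {W V : Type*} [NormedAddCommGroup W] [NormedAddCommGroup V]
  [NormedSpace ℝ W] [NormedSpace ℝ V]

lemma jnorm_triangle (a c : W) (b d : V) :
    Real.sqrt (‖a + c‖ ^ 2 + ‖b + d‖ ^ 2)
      ≤ Real.sqrt (‖a‖ ^ 2 + ‖b‖ ^ 2) + Real.sqrt (‖c‖ ^ 2 + ‖d‖ ^ 2) :=
  le_trans
    (sqrt_sq_add_sq_mono (by rw [abs_norm]; exact norm_add_le a c)
      (by rw [abs_norm]; exact norm_add_le b d))
    (real_two_triangle ‖a‖ ‖b‖ ‖c‖ ‖d‖)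

lemma jnorm_smul (c : ℝ) (a : W) (b : V) :
    Real.sqrt (‖c • a‖ ^ 2 + ‖c • b‖ ^ 2) = |c| * Real.sqrt (‖a‖ ^ 2 + ‖b‖ ^ 2) := by
  rw [norm_smul, norm_smul]
  have h : (‖c‖ * ‖a‖) ^ 2 + (‖c‖ * ‖b‖) ^ 2 = c ^ 2 * (‖a‖ ^ 2 + ‖b‖ ^ 2) := by
    rw [Real.norm_eq_abs, ← sq_abs c]; ring
  rw [h, Real.sqrt_mul (sq_nonneg c), Real.sqrt_sq_eq_abs]

lemma jnorm_sum_le {ι : Type*} (s : Finset ι) (a : ι → W) (b : ι → V) :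
    Real.sqrt (‖∑ i ∈ s, a i‖ ^ 2 + ‖∑ i ∈ s, b i‖ ^ 2)
      ≤ ∑ i ∈ s, Real.sqrt (‖a i‖ ^ 2 + ‖b i‖ ^ 2) := by
  induction s using Finset.cons_induction with
  | empty => simp
  | cons i s hi ih =>
    rw [Finset.sum_cons, Finset.sum_cons, Finset.sum_cons]
    calc Real.sqrt (‖a i + ∑ x ∈ s, a x‖ ^ 2 + ‖b i + ∑ x ∈ s, b x‖ ^ 2)
        ≤ Real.sqrt (‖a i‖ ^ 2 + ‖b i‖ ^ 2)
          + Real.sqrt (‖∑ x ∈ s, a x‖ ^ 2 + ‖∑ x ∈ s, b x‖ ^ 2) :=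
          jnorm_triangle _ _ _ _
      _ ≤ _ := by gcongr

end Vec

lemma sqrt_two_sq (a : ℝ) (ha : 0 ≤ a) : Real.sqrt (a ^ 2 + a ^ 2) = Real.sqrt 2 * a := by
  have h2 : Real.sqrt 2 ^ 2 = 2 := Real.sq_sqrt (by norm_num)
  rw [show a ^ 2 + a ^ 2 = (Real.sqrt 2 * a) ^ 2 by nlinarith, Real.sqrt_sq (by positivity)]

lemma geom_rec (e : ℕ → ℝ) (lam K : ℝ) (η : ℕ → ℝ) (hlam : 0 ≤ lam) (hK : 0 ≤ K)
    (hη : ∀ t, 0 ≤ η t) (h0 : e 0 ≤ 0)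
    (hrec : ∀ t, e (t + 1) ≤ lam * e t + η (t + 1) * K) :
    ∀ t, e t ≤ K * ∑ q ∈ Finset.Icc 1 t, η q * lam ^ (t - q) := by
  intro t
  induction t with
  | zero => simpa using h0
  | succ t ih =>
    have step : ∀ q ∈ Finset.Icc 1 t, η q * lam ^ (t + 1 - q) = lam * (η q * lam ^ (t - q)) := by
      intro q hq
      rw [Finset.mem_Icc] at hq
      have : t + 1 - q = (t - q) + 1 := by omega
      rw [this, pow_succ]; ring
    have hsum_eq : ∑ q ∈ Finset.Icc 1 t, η q * lam ^ (t + 1 - q)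
        = lam * ∑ q ∈ Finset.Icc 1 t, η q * lam ^ (t - q) := by
      rw [Finset.mul_sum]; exact Finset.sum_congr rfl step
    rw [Finset.sum_Icc_succ_top (by omega : 1 ≤ t + 1), hsum_eq]
    have hz : t + 1 - (t + 1) = 0 := by omega
    rw [hz, pow_zero, mul_one]
    have h := hrec t
    have h2 := mul_le_mul_of_nonneg_left ih hlam
    nlinarith

lemma prod_rec (Δ : ℕ → ℝ) (β : ℝ) (η c : ℕ → ℝ) (hβ : 0 ≤ β) (hη : ∀ t, 0 ≤ η t)
    (hc : ∀ t, 0 ≤ c t) (h0 : Δ 0 ≤ 0)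
    (hrec : ∀ t, Δ (t + 1) ≤ (1 + η (t + 1) * β) * Δ t + η (t + 1) * c (t + 1)) :
    ∀ t, Δ t ≤ (∏ s ∈ Finset.Icc 1 t, (1 + η s * β)) * ∑ s ∈ Finset.Icc 1 t, η s * c s := by
  have hprod1 : ∀ t, (1:ℝ) ≤ ∏ s ∈ Finset.Icc 1 t, (1 + η s * β) := by
    intro t
    calc (1:ℝ) = ∏ s ∈ Finset.Icc 1 t, 1 := by simp
      _ ≤ ∏ s ∈ Finset.Icc 1 t, (1 + η s * β) :=
        Finset.prod_le_prod (by intros; norm_num) (by intro s _; nlinarith [hη s])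
  have hsum0 : ∀ t, (0:ℝ) ≤ ∑ s ∈ Finset.Icc 1 t, η s * c s := by
    intro t; exact Finset.sum_nonneg fun s _ => mul_nonneg (hη s) (hc s)
  intro t
  induction t with
  | zero => simpa using h0
  | succ t ih =>
    rw [Finset.prod_Icc_succ_top (by omega : 1 ≤ t + 1),
      Finset.sum_Icc_succ_top (by omega : 1 ≤ t + 1)]
    have hf : (0:ℝ) ≤ 1 + η (t + 1) * β := by nlinarith [hη (t+1)]
    calc Δ (t + 1) ≤ (1 + η (t + 1) * β) * Δ t + η (t + 1) * c (t + 1) := hrec t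
      _ ≤ (1 + η (t + 1) * β) * ((∏ s ∈ Finset.Icc 1 t, (1 + η s * β)) * ∑ s ∈ Finset.Icc 1 t, η s * c s)
          + η (t + 1) * c (t + 1) := by nlinarith [mul_le_mul_of_nonneg_left ih hf]
      _ ≤ _ := by
          have h1 := hprod1 t
          have h2 := hsum0 t
          have h3 : (1:ℝ) ≤ (∏ s ∈ Finset.Icc 1 t, (1 + η s * β)) * (1 + η (t + 1) * β) := by
            nlinarith [hη (t+1)]
          have h4 : (0:ℝ) ≤ η (t + 1) * c (t + 1) := mul_nonneg (hη _) (hc _)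
          nlinarith

lemma prod_le_two (β : ℝ) (hβ : 0 < β) (η : ℕ → ℝ) (hη : ∀ t, 0 ≤ η t) (T : ℕ)
    (hsum : ∑ t ∈ Finset.Icc 1 T, η t ≤ 1 / (2 * β)) :
    (∏ s ∈ Finset.Icc 1 T, (1 + η s * β)) ≤ 2 := by
  have h1 : (∏ s ∈ Finset.Icc 1 T, (1 + η s * β))
      ≤ ∏ s ∈ Finset.Icc 1 T, Real.exp (η s * β) := by
    apply Finset.prod_le_prod
    · intro s _; nlinarith [hη s]
    · intro s _; have := Real.add_one_le_exp (η s * β); linarith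
  rw [← Real.exp_sum] at h1
  have h2 : ∑ s ∈ Finset.Icc 1 T, η s * β ≤ 1 / 2 := by
    rw [← Finset.sum_mul]
    calc (∑ s ∈ Finset.Icc 1 T, η s) * β ≤ (1 / (2 * β)) * β :=
        mul_le_mul_of_nonneg_right hsum hβ.le
      _ = 1 / 2 := by field_simp
  have h3 : Real.exp (∑ s ∈ Finset.Icc 1 T, η s * β) ≤ Real.exp (1 / 2) :=
    Real.exp_le_exp.mpr h2
  have h4 : Real.exp (1 / 2 : ℝ) ≤ 2 := by
    have he : Real.exp (1/2 : ℝ) * Real.exp (1/2 : ℝ) = Real.exp 1 := by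
      rw [← Real.exp_add]; norm_num
    have h5 := Real.exp_one_lt_d9
    nlinarith [Real.exp_pos (1/2 : ℝ)]
  linarith

lemma mix_sum {W : Type*} [AddCommGroup W] [Module ℝ W] {m : ℕ}
    (P : Fin m → Fin m → ℝ) (hcol : ∀ l, ∑ i, P i l = 1) (x : Fin m → W) :
    ∑ i : Fin m, ∑ l, P i l • x l = ∑ l, x l := by
  rw [Finset.sum_comm]
  refine Finset.sum_congr rfl fun l _ => ?_
  rw [← Finset.sum_smul, hcol, one_smul]

end Helpers

set_option maxHeartbeats 1000000 in
lemma per_index (d1 d2 m n : ℕ) (hm : 1 ≤ m)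
    {Z : Type*}
    (f : EuclideanSpace ℝ (Fin d1) → EuclideanSpace ℝ (Fin d2) → Z → ℝ)
    (L : ℝ) (hL : 0 < L)
    (hgradw : ∀ (w : EuclideanSpace ℝ (Fin d1)) (v : EuclideanSpace ℝ (Fin d2)) (z : Z),
      ‖gradient (fun u => f u v z) w‖ ≤ L)
    (hgradv : ∀ (w : EuclideanSpace ℝ (Fin d1)) (v : EuclideanSpace ℝ (Fin d2)) (z : Z),
      ‖gradient (fun u => f w u z) v‖ ≤ L)
    (β : ℝ) (hβ : 0 < β)
    (hsmooth : ∀ (z : Z) (w w' : EuclideanSpace ℝ (Fin d1))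
        (v v' : EuclideanSpace ℝ (Fin d2)),
      Real.sqrt (‖gradient (fun u => f u v z) w - gradient (fun u => f u v' z) w'‖ ^ 2
          + ‖gradient (fun u => f w u z) v - gradient (fun u => f w' u z) v'‖ ^ 2)
        ≤ β * Real.sqrt (‖w - w'‖ ^ 2 + ‖v - v'‖ ^ 2))
    (P : Fin m → Fin m → ℝ)
    (hPsymm : ∀ i l, P i l = P l i)
    (hProw : ∀ i, ∑ l, P i l = 1)
    (lam : ℝ) (hlam0 : 0 ≤ lam)
    (hconsW : ∀ x : Fin m → EuclideanSpace ℝ (Fin d1), ∑ i, x i = 0 →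
      ∑ i, ‖∑ l, P i l • x l‖ ^ 2 ≤ lam ^ 2 * ∑ i, ‖x i‖ ^ 2)
    (hconsV : ∀ x : Fin m → EuclideanSpace ℝ (Fin d2), ∑ i, x i = 0 →
      ∑ i, ‖∑ l, P i l • x l‖ ^ 2 ≤ lam ^ 2 * ∑ i, ‖x i‖ ^ 2)
    (S S' : Fin m → Fin n → Z) (j : ℕ → Fin m → Fin n)
    (η : ℕ → ℝ) (hη : ∀ t, 0 ≤ η t)
    (w0 : EuclideanSpace ℝ (Fin d1)) (v0 : EuclideanSpace ℝ (Fin d2))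
    (wS : ℕ → Fin m → EuclideanSpace ℝ (Fin d1))
    (vS : ℕ → Fin m → EuclideanSpace ℝ (Fin d2))
    (hwS0 : ∀ i, wS 0 i = w0) (hvS0 : ∀ i, vS 0 i = v0)
    (hwSrec : ∀ t i, wS (t + 1) i =
      (∑ l, P i l • wS t l) -
        η (t + 1) • gradient (fun u => f u (vS t i) (S i (j (t + 1) i))) (wS t i))
    (hvSrec : ∀ t i, vS (t + 1) i =
      (∑ l, P i l • vS t l) +
        η (t + 1) • gradient (fun u => f (wS t i) u (S i (j (t + 1) i))) (vS t i))
    (wSrk : Fin m → Fin n → ℕ → Fin m → EuclideanSpace ℝ (Fin d1))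
    (vSrk : Fin m → Fin n → ℕ → Fin m → EuclideanSpace ℝ (Fin d2))
    (hwSrk0 : ∀ r k i, wSrk r k 0 i = w0) (hvSrk0 : ∀ r k i, vSrk r k 0 i = v0)
    (hwSrkrec : ∀ r k t i, wSrk r k (t + 1) i =
      (∑ l, P i l • wSrk r k t l) -
        η (t + 1) • gradient
          (fun u => f u (vSrk r k t i)
            (if i = r ∧ j (t + 1) i = k then S' r k else S i (j (t + 1) i)))
          (wSrk r k t i))
    (hvSrkrec : ∀ r k t i, vSrk r k (t + 1) i =
      (∑ l, P i l • vSrk r k t l) +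
        η (t + 1) • gradient
          (fun u => f (wSrk r k t i) u
            (if i = r ∧ j (t + 1) i = k then S' r k else S i (j (t + 1) i)))
          (vSrk r k t i))
    (T : ℕ)
    (hηsum : ∑ t ∈ Finset.Icc 1 T, η t ≤ 1 / (2 * β))
    (r : Fin m) (k : Fin n) :
    Real.sqrt (‖((m : ℝ)⁻¹ • ∑ i, wS T i) - ((m : ℝ)⁻¹ • ∑ i, wSrk r k T i)‖ ^ 2
          + ‖((m : ℝ)⁻¹ • ∑ i, vS T i) - ((m : ℝ)⁻¹ • ∑ i, vSrk r k T i)‖ ^ 2)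
      ≤ 8 * Real.sqrt 2 * β * L * ∑ t ∈ Finset.Icc 1 T,
          η t * ∑ q ∈ Finset.Icc 1 (t - 1), η q * lam ^ (t - q - 1)
        + (4 * Real.sqrt 2 * L / m) * ∑ t ∈ Finset.Icc 1 T,
            η t * (if j t r = k then (1:ℝ) else 0) := by
  classical
  have hmpos : (0:ℝ) < m := by exact_mod_cast Nat.lt_of_lt_of_le Nat.zero_lt_one hm
  have hm0 : (m:ℝ) ≠ 0 := ne_of_gt hmpos
  have hminv : (0:ℝ) ≤ (m:ℝ)⁻¹ := by positivity
  have hs2 : (0:ℝ) ≤ Real.sqrt 2 := Real.sqrt_nonneg 2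
  have hcol : ∀ l, ∑ i, P i l = 1 := fun l => by
    rw [Finset.sum_congr rfl fun i _ => hPsymm i l]; exact hProw l
  -- abbreviations
  obtain ⟨dw, hdw⟩ : ∃ g : ℕ → Fin m → EuclideanSpace ℝ (Fin d1),
      ∀ t i, g t i = wS t i - wSrk r k t i := ⟨_, fun _ _ => rfl⟩
  obtain ⟨dv, hdv⟩ : ∃ g : ℕ → Fin m → EuclideanSpace ℝ (Fin d2),
      ∀ t i, g t i = vS t i - vSrk r k t i := ⟨_, fun _ _ => rfl⟩
  obtain ⟨Dw, hDw⟩ : ∃ g : ℕ → EuclideanSpace ℝ (Fin d1),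
      ∀ t, g t = (m:ℝ)⁻¹ • ∑ i, dw t i := ⟨_, fun _ => rfl⟩
  obtain ⟨Dv, hDv⟩ : ∃ g : ℕ → EuclideanSpace ℝ (Fin d2),
      ∀ t, g t = (m:ℝ)⁻¹ • ∑ i, dv t i := ⟨_, fun _ => rfl⟩
  obtain ⟨uw, huw⟩ : ∃ g : ℕ → Fin m → EuclideanSpace ℝ (Fin d1),
      ∀ t i, g t i = dw t i - Dw t := ⟨_, fun _ _ => rfl⟩
  obtain ⟨uv, huv⟩ : ∃ g : ℕ → Fin m → EuclideanSpace ℝ (Fin d2),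
      ∀ t i, g t i = dv t i - Dv t := ⟨_, fun _ _ => rfl⟩
  obtain ⟨ξw, hξw⟩ : ∃ g : ℕ → Fin m → EuclideanSpace ℝ (Fin d1),
      ∀ t i, g t i = gradient (fun u => f u (vS t i) (S i (j (t+1) i))) (wS t i)
        - gradient (fun u => f u (vSrk r k t i)
            (if i = r ∧ j (t+1) i = k then S' r k else S i (j (t+1) i))) (wSrk r k t i) :=
    ⟨_, fun _ _ => rfl⟩
  obtain ⟨ξv, hξv⟩ : ∃ g : ℕ → Fin m → EuclideanSpace ℝ (Fin d2),
      ∀ t i, g t i = gradient (fun u => f (wS t i) u (S i (j (t+1) i))) (vS t i)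
        - gradient (fun u => f (wSrk r k t i) u
            (if i = r ∧ j (t+1) i = k then S' r k else S i (j (t+1) i))) (vSrk r k t i) :=
    ⟨_, fun _ _ => rfl⟩
  obtain ⟨Δ, hΔ⟩ : ∃ g : ℕ → ℝ, ∀ t, g t = Real.sqrt (‖Dw t‖ ^ 2 + ‖Dv t‖ ^ 2) :=
    ⟨_, fun _ => rfl⟩
  obtain ⟨E, hE⟩ : ∃ g : ℕ → ℝ, ∀ t, g t = Real.sqrt (∑ i, (‖uw t i‖ ^ 2 + ‖uv t i‖ ^ 2)) :=
    ⟨_, fun _ => rfl⟩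
  obtain ⟨c, hc⟩ : ∃ g : ℕ → ℝ, ∀ s, g s =
      β * (4 * Real.sqrt 2 * L * ∑ q ∈ Finset.Icc 1 (s-1), η q * lam ^ (s - q - 1))
        + (2 * Real.sqrt 2 * L / m) * (if j s r = k then (1:ℝ) else 0) := ⟨_, fun _ => rfl⟩
  -- basic recursions for differences
  have hdwrec : ∀ t i, dw (t+1) i = (∑ l, P i l • dw t l) - η (t+1) • ξw t i := by
    intro t i
    simp only [hdw, hξw, hwSrec, hwSrkrec, smul_sub, Finset.sum_sub_distrib]
    abel
  have hdvrec : ∀ t i, dv (t+1) i = (∑ l, P i l • dv t l) + η (t+1) • ξv t i := by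
    intro t i
    simp only [hdv, hξv, hvSrec, hvSrkrec, smul_sub, Finset.sum_sub_distrib]
    abel
  -- recursions for averages
  have hDwrec : ∀ t, Dw (t+1) = Dw t - ((m:ℝ)⁻¹ * η (t+1)) • ∑ i, ξw t i := by
    intro t
    rw [hDw, hDw]
    simp only [hdwrec, Finset.sum_sub_distrib, mix_sum P hcol]
    rw [← Finset.smul_sum]
    module
  have hDvrec : ∀ t, Dv (t+1) = Dv t + ((m:ℝ)⁻¹ * η (t+1)) • ∑ i, ξv t i := by
    intro t
    rw [hDv, hDv]
    simp only [hdvrec, Finset.sum_add_distrib, mix_sum P hcol]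
    rw [← Finset.smul_sum]
    module

  -- initial values
  have hdw0 : ∀ i, dw 0 i = 0 := fun i => by rw [hdw, hwS0, hwSrk0, sub_self]
  have hdv0 : ∀ i, dv 0 i = 0 := fun i => by rw [hdv, hvS0, hvSrk0, sub_self]
  have hDw0 : Dw 0 = 0 := by rw [hDw]; simp [hdw0]
  have hDv0 : Dv 0 = 0 := by rw [hDv]; simp [hdv0]
  have hΔ0 : Δ 0 = 0 := by rw [hΔ, hDw0, hDv0]; simp
  have huw0 : ∀ i, uw 0 i = 0 := fun i => by rw [huw, hdw0, hDw0, sub_self]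
  have huv0 : ∀ i, uv 0 i = 0 := fun i => by rw [huv, hdv0, hDv0, sub_self]
  have hE0 : E 0 = 0 := by rw [hE]; simp [huw0, huv0]
  have hΔnonneg : ∀ t, 0 ≤ Δ t := fun t => by rw [hΔ]; exact Real.sqrt_nonneg _
  have hEnonneg : ∀ t, 0 ≤ E t := fun t => by rw [hE]; exact Real.sqrt_nonneg _
  -- deviations sum to zero
  have husumw : ∀ t, ∑ i, uw t i = 0 := by
    intro t
    simp only [huw, Finset.sum_sub_distrib, Finset.sum_const, Finset.card_univ,
      Fintype.card_fin, hDw]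
    rw [← Nat.cast_smul_eq_nsmul ℝ, smul_smul, mul_inv_cancel₀ hm0, one_smul, sub_self]
  have husumv : ∀ t, ∑ i, uv t i = 0 := by
    intro t
    simp only [huv, Finset.sum_sub_distrib, Finset.sum_const, Finset.card_univ,
      Fintype.card_fin, hDv]
    rw [← Nat.cast_smul_eq_nsmul ℝ, smul_smul, mul_inv_cancel₀ hm0, one_smul, sub_self]
  -- gradient difference bounds
  have hξwle : ∀ t i, ‖ξw t i‖ ≤ 2 * L := by
    intro t i
    rw [hξw]
    calc ‖_ - _‖ ≤ ‖_‖ + ‖_‖ := norm_sub_le _ _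
      _ ≤ L + L := add_le_add (hgradw _ _ _) (hgradw _ _ _)
      _ = 2 * L := by ring
  have hξvle : ∀ t i, ‖ξv t i‖ ≤ 2 * L := by
    intro t i
    rw [hξv]
    calc ‖_ - _‖ ≤ ‖_‖ + ‖_‖ := norm_sub_le _ _
      _ ≤ L + L := add_le_add (hgradv _ _ _) (hgradv _ _ _)
      _ = 2 * L := by ring
  have hJle : ∀ t i, Real.sqrt (‖ξw t i‖ ^ 2 + ‖ξv t i‖ ^ 2) ≤ 2 * Real.sqrt 2 * L := by
    intro t i
    calc Real.sqrt (‖ξw t i‖ ^ 2 + ‖ξv t i‖ ^ 2)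
        ≤ Real.sqrt ((2 * L) ^ 2 + (2 * L) ^ 2) :=
          sqrt_sq_add_sq_mono (by rw [abs_norm]; exact hξwle t i)
            (by rw [abs_norm]; exact hξvle t i)
      _ = Real.sqrt 2 * (2 * L) := sqrt_two_sq _ (by positivity)
      _ = 2 * Real.sqrt 2 * L := by ring
  have hJsm : ∀ t i, ¬(i = r ∧ j (t + 1) i = k) →
      Real.sqrt (‖ξw t i‖ ^ 2 + ‖ξv t i‖ ^ 2)
        ≤ β * Real.sqrt (‖dw t i‖ ^ 2 + ‖dv t i‖ ^ 2) := by
    intro t i h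
    rw [hξw, hξv, hdw, hdv, if_neg h]
    exact hsmooth (S i (j (t + 1) i)) (wS t i) (wSrk r k t i) (vS t i) (vSrk r k t i)
  have hjointu : ∀ t i, 0 ≤ Real.sqrt (‖uw t i‖ ^ 2 + ‖uv t i‖ ^ 2) :=
    fun t i => Real.sqrt_nonneg _
  -- deviation recursions
  have huwrec : ∀ t i, uw (t + 1) i =
      (∑ l, P i l • uw t l) - η (t + 1) • (ξw t i - (m : ℝ)⁻¹ • ∑ l, ξw t l) := by
    intro t i
    have hPD : ∑ l, P i l • Dw t = Dw t := by rw [← Finset.sum_smul, hProw, one_smul]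
    simp only [huw, hdwrec, hDwrec, smul_sub, Finset.sum_sub_distrib, hPD]
    module
  have huvrec : ∀ t i, uv (t + 1) i =
      (∑ l, P i l • uv t l) + η (t + 1) • (ξv t i - (m : ℝ)⁻¹ • ∑ l, ξv t l) := by
    intro t i
    have hPD : ∑ l, P i l • Dv t = Dv t := by rw [← Finset.sum_smul, hProw, one_smul]
    simp only [huv, hdvrec, hDvrec, smul_sub, Finset.sum_sub_distrib, Finset.sum_add_distrib, hPD]
    module
  -- E recursion
  have hErec : ∀ t, E (t + 1) ≤ lam * E t + η (t + 1) * (4 * Real.sqrt 2 * L * Real.sqrt m) := by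
    intro t
    have hSumXiW : ‖∑ l, ξw t l‖ ≤ (m : ℝ) * (2 * L) := by
      calc ‖∑ l, ξw t l‖ ≤ ∑ l, ‖ξw t l‖ := norm_sum_le _ _
        _ ≤ ∑ _l : Fin m, 2 * L := Finset.sum_le_sum fun l _ => hξwle t l
        _ = (m : ℝ) * (2 * L) := by
            rw [Finset.sum_const, Finset.card_univ, Fintype.card_fin, nsmul_eq_mul]
    have hSumXiV : ‖∑ l, ξv t l‖ ≤ (m : ℝ) * (2 * L) := by
      calc ‖∑ l, ξv t l‖ ≤ ∑ l, ‖ξv t l‖ := norm_sum_le _ _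
        _ ≤ ∑ _l : Fin m, 2 * L := Finset.sum_le_sum fun l _ => hξvle t l
        _ = (m : ℝ) * (2 * L) := by
            rw [Finset.sum_const, Finset.card_univ, Fintype.card_fin, nsmul_eq_mul]
    have hminvm : (m : ℝ)⁻¹ * ((m : ℝ) * (2 * L)) = 2 * L := by field_simp
    have hfw : ∀ i, ‖ξw t i - (m : ℝ)⁻¹ • ∑ l, ξw t l‖ ≤ 4 * L := by
      intro i
      have h2 : ‖(m : ℝ)⁻¹ • ∑ l, ξw t l‖ ≤ 2 * L := by
        rw [norm_smul, Real.norm_eq_abs, abs_of_nonneg hminv]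
        calc (m : ℝ)⁻¹ * ‖∑ l, ξw t l‖ ≤ (m : ℝ)⁻¹ * ((m : ℝ) * (2 * L)) :=
            mul_le_mul_of_nonneg_left hSumXiW hminv
          _ = 2 * L := hminvm
      calc ‖ξw t i - (m : ℝ)⁻¹ • ∑ l, ξw t l‖
          ≤ ‖ξw t i‖ + ‖(m : ℝ)⁻¹ • ∑ l, ξw t l‖ := norm_sub_le _ _
        _ ≤ 2 * L + 2 * L := add_le_add (hξwle t i) h2
        _ = 4 * L := by ring
    have hfv : ∀ i, ‖ξv t i - (m : ℝ)⁻¹ • ∑ l, ξv t l‖ ≤ 4 * L := by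
      intro i
      have h2 : ‖(m : ℝ)⁻¹ • ∑ l, ξv t l‖ ≤ 2 * L := by
        rw [norm_smul, Real.norm_eq_abs, abs_of_nonneg hminv]
        calc (m : ℝ)⁻¹ * ‖∑ l, ξv t l‖ ≤ (m : ℝ)⁻¹ * ((m : ℝ) * (2 * L)) :=
            mul_le_mul_of_nonneg_left hSumXiV hminv
          _ = 2 * L := hminvm
      calc ‖ξv t i - (m : ℝ)⁻¹ • ∑ l, ξv t l‖
          ≤ ‖ξv t i‖ + ‖(m : ℝ)⁻¹ • ∑ l, ξv t l‖ := norm_sub_le _ _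
        _ ≤ 2 * L + 2 * L := add_le_add (hξvle t i) h2
        _ = 4 * L := by ring
    have hjf : ∀ i, Real.sqrt (‖ξw t i - (m : ℝ)⁻¹ • ∑ l, ξw t l‖ ^ 2
        + ‖ξv t i - (m : ℝ)⁻¹ • ∑ l, ξv t l‖ ^ 2) ≤ 4 * Real.sqrt 2 * L := by
      intro i
      calc Real.sqrt (‖ξw t i - (m : ℝ)⁻¹ • ∑ l, ξw t l‖ ^ 2
            + ‖ξv t i - (m : ℝ)⁻¹ • ∑ l, ξv t l‖ ^ 2)
          ≤ Real.sqrt ((4 * L) ^ 2 + (4 * L) ^ 2) :=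
            sqrt_sq_add_sq_mono (by rw [abs_norm]; exact hfw i) (by rw [abs_norm]; exact hfv i)
        _ = Real.sqrt 2 * (4 * L) := sqrt_two_sq _ (by positivity)
        _ = 4 * Real.sqrt 2 * L := by ring
    have hpoint : ∀ i : Fin m, ‖uw (t + 1) i‖ ^ 2 + ‖uv (t + 1) i‖ ^ 2
        ≤ (Real.sqrt (‖∑ l, P i l • uw t l‖ ^ 2 + ‖∑ l, P i l • uv t l‖ ^ 2)
            + η (t + 1) * (4 * Real.sqrt 2 * L)) ^ 2 := by
      intro i
      have h1 : Real.sqrt (‖uw (t + 1) i‖ ^ 2 + ‖uv (t + 1) i‖ ^ 2)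
          ≤ Real.sqrt (‖∑ l, P i l • uw t l‖ ^ 2 + ‖∑ l, P i l • uv t l‖ ^ 2)
            + η (t + 1) * (4 * Real.sqrt 2 * L) := by
        have tri := jnorm_triangle (∑ l, P i l • uw t l)
          (-(η (t + 1) • (ξw t i - (m : ℝ)⁻¹ • ∑ l, ξw t l)))
          (∑ l, P i l • uv t l) (η (t + 1) • (ξv t i - (m : ℝ)⁻¹ • ∑ l, ξv t l))
        rw [← sub_eq_add_neg] at tri
        rw [huwrec, huvrec]
        refine tri.trans ?_
        rw [norm_neg, jnorm_smul, abs_of_nonneg (hη _)]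
        exact add_le_add (le_refl _) (mul_le_mul_of_nonneg_left (hjf i) (hη _))
      have h2 : ‖uw (t + 1) i‖ ^ 2 + ‖uv (t + 1) i‖ ^ 2
          = Real.sqrt (‖uw (t + 1) i‖ ^ 2 + ‖uv (t + 1) i‖ ^ 2) ^ 2 :=
        (Real.sq_sqrt (by positivity)).symm
      rw [h2]
      exact pow_le_pow_left₀ (Real.sqrt_nonneg _) h1 2
    have hE1 : E (t + 1) ≤ Real.sqrt (∑ i,
        (Real.sqrt (‖∑ l, P i l • uw t l‖ ^ 2 + ‖∑ l, P i l • uv t l‖ ^ 2)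
          + η (t + 1) * (4 * Real.sqrt 2 * L)) ^ 2) := by
      rw [hE]
      exact Real.sqrt_le_sqrt (Finset.sum_le_sum fun i _ => hpoint i)
    have hE2 := real_minkowski Finset.univ
      (fun i => Real.sqrt (‖∑ l, P i l • uw t l‖ ^ 2 + ‖∑ l, P i l • uv t l‖ ^ 2))
      (fun _ => η (t + 1) * (4 * Real.sqrt 2 * L))
    have hp2 : ∑ i, Real.sqrt (‖∑ l, P i l • uw t l‖ ^ 2 + ‖∑ l, P i l • uv t l‖ ^ 2) ^ 2
        = ∑ i, ‖∑ l, P i l • uw t l‖ ^ 2 + ∑ i, ‖∑ l, P i l • uv t l‖ ^ 2 := by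
      rw [← Finset.sum_add_distrib]
      exact Finset.sum_congr rfl fun i _ => Real.sq_sqrt (by positivity)
    have hcons : ∑ i, ‖∑ l, P i l • uw t l‖ ^ 2 + ∑ i, ‖∑ l, P i l • uv t l‖ ^ 2
        ≤ (lam * E t) ^ 2 := by
      have h1 := hconsW (uw t) (husumw t)
      have h2 := hconsV (uv t) (husumv t)
      have hEt2 : (E t) ^ 2 = ∑ i, (‖uw t i‖ ^ 2 + ‖uv t i‖ ^ 2) := by
        rw [hE]; exact Real.sq_sqrt (by positivity)
      have heq : (lam * E t) ^ 2
          = lam ^ 2 * ∑ i, ‖uw t i‖ ^ 2 + lam ^ 2 * ∑ i, ‖uv t i‖ ^ 2 := by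
        rw [mul_pow, hEt2, Finset.sum_add_distrib]; ring
      linarith
    have hps : Real.sqrt (∑ i,
        Real.sqrt (‖∑ l, P i l • uw t l‖ ^ 2 + ‖∑ l, P i l • uv t l‖ ^ 2) ^ 2)
        ≤ lam * E t := by
      calc Real.sqrt (∑ i,
          Real.sqrt (‖∑ l, P i l • uw t l‖ ^ 2 + ‖∑ l, P i l • uv t l‖ ^ 2) ^ 2)
          ≤ Real.sqrt ((lam * E t) ^ 2) := Real.sqrt_le_sqrt (by rw [hp2]; exact hcons)
        _ = lam * E t := Real.sqrt_sq (mul_nonneg hlam0 (hEnonneg t))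
    have hqs : Real.sqrt (∑ _i : Fin m, (η (t + 1) * (4 * Real.sqrt 2 * L)) ^ 2)
        = Real.sqrt m * (η (t + 1) * (4 * Real.sqrt 2 * L)) := by
      rw [Finset.sum_const, Finset.card_univ, Fintype.card_fin, nsmul_eq_mul,
        Real.sqrt_mul (Nat.cast_nonneg m),
        Real.sqrt_sq (mul_nonneg (hη _) (by positivity))]
    have hre : Real.sqrt m * (η (t + 1) * (4 * Real.sqrt 2 * L))
        = η (t + 1) * (4 * Real.sqrt 2 * L * Real.sqrt m) := by ring
    rw [hqs, hre] at hE2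
    linarith [hE1.trans hE2]
  -- E bound
  have hEbound := geom_rec E lam (4 * Real.sqrt 2 * L * Real.sqrt m) η hlam0
    (by positivity) hη (le_of_eq hE0) hErec
  have hubar : ∀ t, (m : ℝ)⁻¹ * ∑ i, Real.sqrt (‖uw t i‖ ^ 2 + ‖uv t i‖ ^ 2)
      ≤ 4 * Real.sqrt 2 * L * ∑ q ∈ Finset.Icc 1 t, η q * lam ^ (t - q) := by
    intro t
    have hcs : ∑ i, Real.sqrt (‖uw t i‖ ^ 2 + ‖uv t i‖ ^ 2) ≤ Real.sqrt m * E t := by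
      have h := Real.sum_mul_le_sqrt_mul_sqrt Finset.univ
        (fun i => Real.sqrt (‖uw t i‖ ^ 2 + ‖uv t i‖ ^ 2)) (fun _ => (1 : ℝ))
      simp only [mul_one, one_pow] at h
      have e1 : ∑ i, Real.sqrt (‖uw t i‖ ^ 2 + ‖uv t i‖ ^ 2) ^ 2
          = ∑ i, (‖uw t i‖ ^ 2 + ‖uv t i‖ ^ 2) :=
        Finset.sum_congr rfl fun i _ => Real.sq_sqrt (by positivity)
      have e2 : ∑ _i : Fin m, (1 : ℝ) = (m : ℝ) := by
        rw [Finset.sum_const, Finset.card_univ, Fintype.card_fin, nsmul_eq_mul, mul_one]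
      rw [e1, e2] at h
      rw [hE]
      exact h.trans_eq (mul_comm _ _)
    have hmm2 : Real.sqrt m * Real.sqrt m = (m : ℝ) := Real.mul_self_sqrt (Nat.cast_nonneg m)
    have h2 : (m : ℝ)⁻¹ * ∑ i, Real.sqrt (‖uw t i‖ ^ 2 + ‖uv t i‖ ^ 2)
        ≤ (m : ℝ)⁻¹ * (Real.sqrt m * E t) := mul_le_mul_of_nonneg_left hcs hminv
    have h4 : (m : ℝ)⁻¹ * (Real.sqrt m * E t)
        ≤ (m : ℝ)⁻¹ * (Real.sqrt m * ((4 * Real.sqrt 2 * L * Real.sqrt m)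
            * ∑ q ∈ Finset.Icc 1 t, η q * lam ^ (t - q))) :=
      mul_le_mul_of_nonneg_left
        (mul_le_mul_of_nonneg_left (hEbound t) (Real.sqrt_nonneg _)) hminv
    have h5 : (m : ℝ)⁻¹ * (Real.sqrt m * ((4 * Real.sqrt 2 * L * Real.sqrt m)
          * ∑ q ∈ Finset.Icc 1 t, η q * lam ^ (t - q)))
        = 4 * Real.sqrt 2 * L * ∑ q ∈ Finset.Icc 1 t, η q * lam ^ (t - q) := by
      have e : (m : ℝ)⁻¹ * (Real.sqrt m * ((4 * Real.sqrt 2 * L * Real.sqrt m)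
            * ∑ q ∈ Finset.Icc 1 t, η q * lam ^ (t - q)))
          = ((Real.sqrt m * Real.sqrt m) * (m : ℝ)⁻¹)
            * (4 * Real.sqrt 2 * L * ∑ q ∈ Finset.Icc 1 t, η q * lam ^ (t - q)) := by ring
      rw [e, hmm2, mul_inv_cancel₀ hm0, one_mul]
    linarith
  -- Delta recursion
  have hΔrec : ∀ t, Δ (t + 1) ≤ (1 + η (t + 1) * β) * Δ t + η (t + 1) * c (t + 1) := by
    intro t
    have ha0 : 0 ≤ (m : ℝ)⁻¹ * η (t + 1) := mul_nonneg hminv (hη _)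
    have h1 : Δ (t + 1) ≤ Δ t + ((m : ℝ)⁻¹ * η (t + 1))
        * Real.sqrt (‖∑ i, ξw t i‖ ^ 2 + ‖∑ i, ξv t i‖ ^ 2) := by
      rw [hΔ, hΔ, hDwrec, hDvrec]
      have tri := jnorm_triangle (Dw t) (-(((m : ℝ)⁻¹ * η (t + 1)) • ∑ i, ξw t i)) (Dv t)
        (((m : ℝ)⁻¹ * η (t + 1)) • ∑ i, ξv t i)
      rw [← sub_eq_add_neg] at tri
      refine tri.trans ?_
      rw [norm_neg, jnorm_smul, abs_of_nonneg ha0]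
    have h2 : Real.sqrt (‖∑ i, ξw t i‖ ^ 2 + ‖∑ i, ξv t i‖ ^ 2)
        ≤ ∑ i, Real.sqrt (‖ξw t i‖ ^ 2 + ‖ξv t i‖ ^ 2) := jnorm_sum_le _ _ _
    have h3 : ∀ i : Fin m, Real.sqrt (‖ξw t i‖ ^ 2 + ‖ξv t i‖ ^ 2)
        ≤ β * Δ t + β * Real.sqrt (‖uw t i‖ ^ 2 + ‖uv t i‖ ^ 2)
          + (if i = r ∧ j (t + 1) i = k then 2 * Real.sqrt 2 * L else 0) := by
      intro i
      have hd_decomp : Real.sqrt (‖dw t i‖ ^ 2 + ‖dv t i‖ ^ 2)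
          ≤ Δ t + Real.sqrt (‖uw t i‖ ^ 2 + ‖uv t i‖ ^ 2) := by
        have e1 : dw t i = Dw t + uw t i := by rw [huw]; abel
        have e2 : dv t i = Dv t + uv t i := by rw [huv]; abel
        rw [e1, e2, hΔ]
        exact jnorm_triangle _ _ _ _
      by_cases hcase : i = r ∧ j (t + 1) i = k
      · rw [if_pos hcase]
        have hb : 0 ≤ β * Δ t + β * Real.sqrt (‖uw t i‖ ^ 2 + ‖uv t i‖ ^ 2) := by
          have hh1 := hΔnonneg t
          have hh2 := hjointu t i
          have := mul_nonneg hβ.le hh1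
          have := mul_nonneg hβ.le hh2
          linarith
        linarith [hJle t i]
      · rw [if_neg hcase]
        have h := hJsm t i hcase
        have h' : β * Real.sqrt (‖dw t i‖ ^ 2 + ‖dv t i‖ ^ 2)
            ≤ β * (Δ t + Real.sqrt (‖uw t i‖ ^ 2 + ‖uv t i‖ ^ 2)) :=
          mul_le_mul_of_nonneg_left hd_decomp hβ.le
        rw [mul_add] at h'
        linarith
    have hA0 : 0 ≤ ∑ i, Real.sqrt (‖uw t i‖ ^ 2 + ‖uv t i‖ ^ 2) :=
      Finset.sum_nonneg fun i _ => hjointu t i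
    have h4 : ∑ i, Real.sqrt (‖ξw t i‖ ^ 2 + ‖ξv t i‖ ^ 2)
        ≤ (m : ℝ) * (β * Δ t) + β * ∑ i, Real.sqrt (‖uw t i‖ ^ 2 + ‖uv t i‖ ^ 2)
          + 2 * Real.sqrt 2 * L * (if j (t + 1) r = k then (1 : ℝ) else 0) := by
      have hstep := Finset.sum_le_sum fun i (_ : i ∈ Finset.univ) => h3 i
      have hsplit : ∑ i : Fin m, (β * Δ t + β * Real.sqrt (‖uw t i‖ ^ 2 + ‖uv t i‖ ^ 2)
            + (if i = r ∧ j (t + 1) i = k then 2 * Real.sqrt 2 * L else 0))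
          = (m : ℝ) * (β * Δ t) + β * ∑ i, Real.sqrt (‖uw t i‖ ^ 2 + ‖uv t i‖ ^ 2)
            + 2 * Real.sqrt 2 * L * (if j (t + 1) r = k then (1 : ℝ) else 0) := by
      
        rw [Finset.sum_add_distrib, Finset.sum_add_distrib]
        have hA : ∑ _i : Fin m, (β * Δ t) = (m : ℝ) * (β * Δ t) := by
          rw [Finset.sum_const, Finset.card_univ, Fintype.card_fin, nsmul_eq_mul]
        have hB : ∑ i, β * Real.sqrt (‖uw t i‖ ^ 2 + ‖uv t i‖ ^ 2)
            = β * ∑ i, Real.sqrt (‖uw t i‖ ^ 2 + ‖uv t i‖ ^ 2) := by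
          rw [Finset.mul_sum]
        have hC : ∑ i : Fin m, (if i = r ∧ j (t + 1) i = k then (2 * Real.sqrt 2 * L : ℝ) else 0)
            = 2 * Real.sqrt 2 * L * (if j (t + 1) r = k then (1 : ℝ) else 0) := by
          have hind : ∀ i : Fin m,
              (if i = r ∧ j (t + 1) i = k then (2 * Real.sqrt 2 * L : ℝ) else 0)
              = if i = r then (if j (t + 1) r = k then (2 * Real.sqrt 2 * L : ℝ) else 0) else 0 := by
            intro i
            by_cases hi : i = r
            · subst hi; by_cases hj : j (t + 1) i = k <;> simp [hj]
            · simp [hi]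
          rw [Finset.sum_congr rfl fun i _ => hind i,
            Finset.sum_ite_eq' Finset.univ r, if_pos (Finset.mem_univ r)]
          by_cases hj : j (t + 1) r = k <;> simp [hj]
        rw [hA, hB, hC]
      linarith [hstep, le_of_eq hsplit]
    have hub := hubar t
    have hc1 : c (t + 1)
        = β * (4 * Real.sqrt 2 * L * ∑ q ∈ Finset.Icc 1 t, η q * lam ^ (t - q))
          + (2 * Real.sqrt 2 * L / m) * (if j (t + 1) r = k then (1 : ℝ) else 0) := by
      have hex : ∑ q ∈ Finset.Icc 1 (t + 1 - 1), η q * lam ^ (t + 1 - q - 1)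
          = ∑ q ∈ Finset.Icc 1 t, η q * lam ^ (t - q) := by
        simp only [Nat.add_sub_cancel]
        refine Finset.sum_congr rfl fun q hq => ?_
        rw [Finset.mem_Icc] at hq
        have hqe : t + 1 - q - 1 = t - q := by omega
        rw [hqe]
      rw [hc, hex]
    have hmono := mul_le_mul_of_nonneg_left (h2.trans h4) ha0
    have hexp : ((m : ℝ)⁻¹ * η (t + 1)) * ((m : ℝ) * (β * Δ t)
          + β * ∑ i, Real.sqrt (‖uw t i‖ ^ 2 + ‖uv t i‖ ^ 2)
          + 2 * Real.sqrt 2 * L * (if j (t + 1) r = k then (1 : ℝ) else 0))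
        = ((m : ℝ)⁻¹ * η (t + 1)) * ((m : ℝ) * (β * Δ t))
          + ((m : ℝ)⁻¹ * η (t + 1)) * (β * ∑ i, Real.sqrt (‖uw t i‖ ^ 2 + ‖uv t i‖ ^ 2))
          + ((m : ℝ)⁻¹ * η (t + 1))
            * (2 * Real.sqrt 2 * L * (if j (t + 1) r = k then (1 : ℝ) else 0)) := by ring
    have key1 : ((m : ℝ)⁻¹ * η (t + 1)) * ((m : ℝ) * (β * Δ t)) = η (t + 1) * β * Δ t := by
      field_simp
    have key2 : ((m : ℝ)⁻¹ * η (t + 1))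
          * (β * ∑ i, Real.sqrt (‖uw t i‖ ^ 2 + ‖uv t i‖ ^ 2))
        ≤ η (t + 1) * (β * (4 * Real.sqrt 2 * L
            * ∑ q ∈ Finset.Icc 1 t, η q * lam ^ (t - q))) := by
      have e : ((m : ℝ)⁻¹ * η (t + 1))
            * (β * ∑ i, Real.sqrt (‖uw t i‖ ^ 2 + ‖uv t i‖ ^ 2))
          = η (t + 1) * (β * ((m : ℝ)⁻¹
              * ∑ i, Real.sqrt (‖uw t i‖ ^ 2 + ‖uv t i‖ ^ 2))) := by ring
      rw [e]
      exact mul_le_mul_of_nonneg_left (mul_le_mul_of_nonneg_left hub hβ.le) (hη _)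
    have key3 : ((m : ℝ)⁻¹ * η (t + 1))
          * (2 * Real.sqrt 2 * L * (if j (t + 1) r = k then (1 : ℝ) else 0))
        = η (t + 1) * ((2 * Real.sqrt 2 * L / m) * (if j (t + 1) r = k then (1 : ℝ) else 0)) := by
      rw [div_eq_mul_inv]; ring
    have goal_eq : (1 + η (t + 1) * β) * Δ t
          + η (t + 1) * (β * (4 * Real.sqrt 2 * L
              * ∑ q ∈ Finset.Icc 1 t, η q * lam ^ (t - q))
            + (2 * Real.sqrt 2 * L / m) * (if j (t + 1) r = k then (1 : ℝ) else 0))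
        = Δ t + η (t + 1) * β * Δ t
          + η (t + 1) * (β * (4 * Real.sqrt 2 * L
              * ∑ q ∈ Finset.Icc 1 t, η q * lam ^ (t - q)))
          + η (t + 1) * ((2 * Real.sqrt 2 * L / m)
              * (if j (t + 1) r = k then (1 : ℝ) else 0)) := by ring
    rw [hc1]
    rw [hexp] at hmono
    linarith [h1, hmono, key2, goal_eq, le_of_eq key1, le_of_eq key3]
  -- conclude
  have hcnn : ∀ s, 0 ≤ c s := by
    intro s
    rw [hc]
    have h1 : 0 ≤ ∑ q ∈ Finset.Icc 1 (s - 1), η q * lam ^ (s - q - 1) :=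
      Finset.sum_nonneg fun q _ => mul_nonneg (hη q) (pow_nonneg hlam0 _)
    have h2 : (0 : ℝ) ≤ (if j s r = k then (1 : ℝ) else 0) := by split <;> norm_num
    have h3 : (0 : ℝ) ≤ 2 * Real.sqrt 2 * L / m := by positivity
    exact add_nonneg (mul_nonneg hβ.le (mul_nonneg (by positivity) h1)) (mul_nonneg h3 h2)
  have hΔT := prod_rec Δ β η c hβ.le hη hcnn (le_of_eq hΔ0) hΔrec T
  have hP2 := prod_le_two β hβ η hη T hηsum
  have hsum_c_nn : 0 ≤ ∑ s ∈ Finset.Icc 1 T, η s * c s :=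
    Finset.sum_nonneg fun s _ => mul_nonneg (hη s) (hcnn s)
  have hΔT2 : Δ T ≤ 2 * ∑ s ∈ Finset.Icc 1 T, η s * c s :=
    hΔT.trans (mul_le_mul_of_nonneg_right hP2 hsum_c_nn)
  have hfinal_eq : 2 * ∑ s ∈ Finset.Icc 1 T, η s * c s
      = 8 * Real.sqrt 2 * β * L * ∑ t ∈ Finset.Icc 1 T,
          η t * ∑ q ∈ Finset.Icc 1 (t - 1), η q * lam ^ (t - q - 1)
        + (4 * Real.sqrt 2 * L / m) * ∑ t ∈ Finset.Icc 1 T,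
            η t * (if j t r = k then (1 : ℝ) else 0) := by
    rw [Finset.mul_sum, Finset.mul_sum, Finset.mul_sum, ← Finset.sum_add_distrib]
    refine Finset.sum_congr rfl fun s _ => ?_
    rw [hc]
    ring
  have hgoalL : Real.sqrt (‖((m : ℝ)⁻¹ • ∑ i, wS T i) - ((m : ℝ)⁻¹ • ∑ i, wSrk r k T i)‖ ^ 2
      + ‖((m : ℝ)⁻¹ • ∑ i, vS T i) - ((m : ℝ)⁻¹ • ∑ i, vSrk r k T i)‖ ^ 2) = Δ T := by
    rw [hΔ, hDw, hDv]
    have e1 : (m : ℝ)⁻¹ • ∑ i, dw T i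
        = ((m : ℝ)⁻¹ • ∑ i, wS T i) - ((m : ℝ)⁻¹ • ∑ i, wSrk r k T i) := by
      simp only [hdw]
      rw [Finset.sum_sub_distrib, smul_sub]
    have e2 : (m : ℝ)⁻¹ • ∑ i, dv T i
        = ((m : ℝ)⁻¹ • ∑ i, vS T i) - ((m : ℝ)⁻¹ • ∑ i, vSrk r k T i) := by
      simp only [hdv]
      rw [Finset.sum_sub_distrib, smul_sub]
    rw [e1, e2]
  rw [hgoalL]
  exact hΔT2.trans_eq hfinal_eq

theorem stmt_17 (d1 d2 m n : ℕ) (hd1 : 1 ≤ d1) (hd2 : 1 ≤ d2) (hm : 1 ≤ m) (hn : 1 ≤ n)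
    {Z : Type*}
    (f : EuclideanSpace ℝ (Fin d1) → EuclideanSpace ℝ (Fin d2) → Z → ℝ)
    (L : ℝ) (hL : 0 < L)
    (hdiffw : ∀ (v : EuclideanSpace ℝ (Fin d2)) (z : Z),
      Differentiable ℝ (fun w => f w v z))
    (hdiffv : ∀ (w : EuclideanSpace ℝ (Fin d1)) (z : Z),
      Differentiable ℝ (fun v => f w v z))
    (hgradw : ∀ (w : EuclideanSpace ℝ (Fin d1)) (v : EuclideanSpace ℝ (Fin d2)) (z : Z),
      ‖gradient (fun u => f u v z) w‖ ≤ L)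
    (hgradv : ∀ (w : EuclideanSpace ℝ (Fin d1)) (v : EuclideanSpace ℝ (Fin d2)) (z : Z),
      ‖gradient (fun u => f w u z) v‖ ≤ L)
    (hconv : ∀ (v : EuclideanSpace ℝ (Fin d2)) (z : Z),
      ConvexOn ℝ Set.univ (fun w => f w v z))
    (hconc : ∀ (w : EuclideanSpace ℝ (Fin d1)) (z : Z),
      ConcaveOn ℝ Set.univ (fun v => f w v z))
    (β : ℝ) (hβ : 0 < β)
    (hsmooth : ∀ (z : Z) (w w' : EuclideanSpace ℝ (Fin d1))
        (v v' : EuclideanSpace ℝ (Fin d2)),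
      Real.sqrt (‖gradient (fun u => f u v z) w - gradient (fun u => f u v' z) w'‖ ^ 2
          + ‖gradient (fun u => f w u z) v - gradient (fun u => f w' u z) v'‖ ^ 2)
        ≤ β * Real.sqrt (‖w - w'‖ ^ 2 + ‖v - v'‖ ^ 2))
    (P : Fin m → Fin m → ℝ)
    (hPsymm : ∀ i l, P i l = P l i)
    (hPnonneg : ∀ i l, 0 ≤ P i l)
    (hProw : ∀ i, ∑ l, P i l = 1)
    (lam : ℝ) (hlam0 : 0 ≤ lam) (hlam1 : lam < 1)
    (hconsW : ∀ x : Fin m → EuclideanSpace ℝ (Fin d1), ∑ i, x i = 0 →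
      ∑ i, ‖∑ l, P i l • x l‖ ^ 2 ≤ lam ^ 2 * ∑ i, ‖x i‖ ^ 2)
    (hconsV : ∀ x : Fin m → EuclideanSpace ℝ (Fin d2), ∑ i, x i = 0 →
      ∑ i, ‖∑ l, P i l • x l‖ ^ 2 ≤ lam ^ 2 * ∑ i, ‖x i‖ ^ 2)
    (S S' : Fin m → Fin n → Z) (j : ℕ → Fin m → Fin n)
    (η : ℕ → ℝ) (hη : ∀ t, 0 ≤ η t)
    (w0 : EuclideanSpace ℝ (Fin d1)) (v0 : EuclideanSpace ℝ (Fin d2))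
    (wS : ℕ → Fin m → EuclideanSpace ℝ (Fin d1))
    (vS : ℕ → Fin m → EuclideanSpace ℝ (Fin d2))
    (hwS0 : ∀ i, wS 0 i = w0) (hvS0 : ∀ i, vS 0 i = v0)
    (hwSrec : ∀ t i, wS (t + 1) i =
      (∑ l, P i l • wS t l) -
        η (t + 1) • gradient (fun u => f u (vS t i) (S i (j (t + 1) i))) (wS t i))
    (hvSrec : ∀ t i, vS (t + 1) i =
      (∑ l, P i l • vS t l) +
        η (t + 1) • gradient (fun u => f (wS t i) u (S i (j (t + 1) i))) (vS t i))
    (wSrk : Fin m → Fin n → ℕ → Fin m → EuclideanSpace ℝ (Fin d1))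
    (vSrk : Fin m → Fin n → ℕ → Fin m → EuclideanSpace ℝ (Fin d2))
    (hwSrk0 : ∀ r k i, wSrk r k 0 i = w0) (hvSrk0 : ∀ r k i, vSrk r k 0 i = v0)
    (hwSrkrec : ∀ r k t i, wSrk r k (t + 1) i =
      (∑ l, P i l • wSrk r k t l) -
        η (t + 1) • gradient
          (fun u => f u (vSrk r k t i)
            (if i = r ∧ j (t + 1) i = k then S' r k else S i (j (t + 1) i)))
          (wSrk r k t i))
    (hvSrkrec : ∀ r k t i, vSrk r k (t + 1) i =
      (∑ l, P i l • vSrk r k t l) +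
        η (t + 1) • gradient
          (fun u => f (wSrk r k t i) u
            (if i = r ∧ j (t + 1) i = k then S' r k else S i (j (t + 1) i)))
          (vSrk r k t i))
    (T : ℕ) (hT : 1 ≤ T)
    (hηsum : ∑ t ∈ Finset.Icc 1 T, η t ≤ 1 / (2 * β)) :
    (1 / ((m : ℝ) * n)) * ∑ r : Fin m, ∑ k : Fin n,
        Real.sqrt (‖((m : ℝ)⁻¹ • ∑ i, wS T i) - ((m : ℝ)⁻¹ • ∑ i, wSrk r k T i)‖ ^ 2
          + ‖((m : ℝ)⁻¹ • ∑ i, vS T i) - ((m : ℝ)⁻¹ • ∑ i, vSrk r k T i)‖ ^ 2)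
      ≤ 8 * Real.sqrt 2 * β * L * ∑ t ∈ Finset.Icc 1 T,
          η t * ∑ q ∈ Finset.Icc 1 (t - 1), η q * lam ^ (t - q - 1)
        + (4 * Real.sqrt 2 * L / ((m : ℝ) * n)) * ∑ t ∈ Finset.Icc 1 T, η t := by
  classical
  have hmpos : (0 : ℝ) < m := by exact_mod_cast Nat.lt_of_lt_of_le Nat.zero_lt_one hm
  have hnpos : (0 : ℝ) < n := by exact_mod_cast Nat.lt_of_lt_of_le Nat.zero_lt_one hn
  have hm0 : (m : ℝ) ≠ 0 := ne_of_gt hmpos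
  have hn0 : (n : ℝ) ≠ 0 := ne_of_gt hnpos
  have key : ∀ (r : Fin m) (k : Fin n),
      Real.sqrt (‖((m : ℝ)⁻¹ • ∑ i, wS T i) - ((m : ℝ)⁻¹ • ∑ i, wSrk r k T i)‖ ^ 2
          + ‖((m : ℝ)⁻¹ • ∑ i, vS T i) - ((m : ℝ)⁻¹ • ∑ i, vSrk r k T i)‖ ^ 2)
        ≤ 8 * Real.sqrt 2 * β * L * ∑ t ∈ Finset.Icc 1 T,
            η t * ∑ q ∈ Finset.Icc 1 (t - 1), η q * lam ^ (t - q - 1)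
          + (4 * Real.sqrt 2 * L / m) * ∑ t ∈ Finset.Icc 1 T,
              η t * (if j t r = k then (1 : ℝ) else 0) :=
    fun r k => per_index d1 d2 m n hm f L hL hgradw hgradv β hβ hsmooth P hPsymm hProw
      lam hlam0 hconsW hconsV S S' j η hη w0 v0 wS vS hwS0 hvS0 hwSrec hvSrec
      wSrk vSrk hwSrk0 hvSrk0 hwSrkrec hvSrkrec T hηsum r k
  have hfrac : (0 : ℝ) ≤ 1 / ((m : ℝ) * n) := by positivity
  have step1 : (1 / ((m : ℝ) * n)) * ∑ r : Fin m, ∑ k : Fin n,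
        Real.sqrt (‖((m : ℝ)⁻¹ • ∑ i, wS T i) - ((m : ℝ)⁻¹ • ∑ i, wSrk r k T i)‖ ^ 2
          + ‖((m : ℝ)⁻¹ • ∑ i, vS T i) - ((m : ℝ)⁻¹ • ∑ i, vSrk r k T i)‖ ^ 2)
      ≤ (1 / ((m : ℝ) * n)) * ∑ r : Fin m, ∑ k : Fin n,
          (8 * Real.sqrt 2 * β * L * ∑ t ∈ Finset.Icc 1 T,
              η t * ∑ q ∈ Finset.Icc 1 (t - 1), η q * lam ^ (t - q - 1)
            + (4 * Real.sqrt 2 * L / m) * ∑ t ∈ Finset.Icc 1 T,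
                η t * (if j t r = k then (1 : ℝ) else 0)) :=
    mul_le_mul_of_nonneg_left
      (Finset.sum_le_sum fun r _ => Finset.sum_le_sum fun k _ => key r k) hfrac
  have hinner : ∀ r : Fin m, ∑ k : Fin n,
        (8 * Real.sqrt 2 * β * L * ∑ t ∈ Finset.Icc 1 T,
            η t * ∑ q ∈ Finset.Icc 1 (t - 1), η q * lam ^ (t - q - 1)
          + (4 * Real.sqrt 2 * L / m) * ∑ t ∈ Finset.Icc 1 T,
              η t * (if j t r = k then (1 : ℝ) else 0))
      = (n : ℝ) * (8 * Real.sqrt 2 * β * L * ∑ t ∈ Finset.Icc 1 T,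
            η t * ∑ q ∈ Finset.Icc 1 (t - 1), η q * lam ^ (t - q - 1))
        + (4 * Real.sqrt 2 * L / m) * ∑ t ∈ Finset.Icc 1 T, η t := by
    intro r
    rw [Finset.sum_add_distrib]
    congr 1
    · rw [Finset.sum_const, Finset.card_univ, Fintype.card_fin, nsmul_eq_mul]
    · rw [← Finset.mul_sum]
      congr 1
      rw [Finset.sum_comm]
      refine Finset.sum_congr rfl fun t _ => ?_
      rw [← Finset.mul_sum]
      have : ∑ k : Fin n, (if j t r = k then (1 : ℝ) else 0) = 1 := by
        rw [Finset.sum_ite_eq Finset.univ (j t r) (fun _ => (1 : ℝ))]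
        simp
      rw [this, mul_one]
  have step2 : ∑ r : Fin m, ∑ k : Fin n,
        (8 * Real.sqrt 2 * β * L * ∑ t ∈ Finset.Icc 1 T,
            η t * ∑ q ∈ Finset.Icc 1 (t - 1), η q * lam ^ (t - q - 1)
          + (4 * Real.sqrt 2 * L / m) * ∑ t ∈ Finset.Icc 1 T,
              η t * (if j t r = k then (1 : ℝ) else 0))
      = (m : ℝ) * ((n : ℝ) * (8 * Real.sqrt 2 * β * L * ∑ t ∈ Finset.Icc 1 T,
            η t * ∑ q ∈ Finset.Icc 1 (t - 1), η q * lam ^ (t - q - 1))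
          + (4 * Real.sqrt 2 * L / m) * ∑ t ∈ Finset.Icc 1 T, η t) := by
    rw [Finset.sum_congr rfl fun r _ => hinner r, Finset.sum_const, Finset.card_univ,
      Fintype.card_fin, nsmul_eq_mul]
  have step3 : (1 / ((m : ℝ) * n))
        * ((m : ℝ) * ((n : ℝ) * (8 * Real.sqrt 2 * β * L * ∑ t ∈ Finset.Icc 1 T,
            η t * ∑ q ∈ Finset.Icc 1 (t - 1), η q * lam ^ (t - q - 1))
          + (4 * Real.sqrt 2 * L / m) * ∑ t ∈ Finset.Icc 1 T, η t))
      = 8 * Real.sqrt 2 * β * L * ∑ t ∈ Finset.Icc 1 T,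
          η t * ∑ q ∈ Finset.Icc 1 (t - 1), η q * lam ^ (t - q - 1)
        + (4 * Real.sqrt 2 * L / ((m : ℝ) * n)) * ∑ t ∈ Finset.Icc 1 T, η t := by
    field_simp
  calc (1 / ((m : ℝ) * n)) * ∑ r : Fin m, ∑ k : Fin n,
        Real.sqrt (‖((m : ℝ)⁻¹ • ∑ i, wS T i) - ((m : ℝ)⁻¹ • ∑ i, wSrk r k T i)‖ ^ 2
          + ‖((m : ℝ)⁻¹ • ∑ i, vS T i) - ((m : ℝ)⁻¹ • ∑ i, vSrk r k T i)‖ ^ 2)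
      ≤ _ := step1
    _ = _ := by rw [step2, step3]
end
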